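/- arXiv:2309.14170 — 11 statements merged into one kernel-verified Lean document; each statement's English description precedes it below -/
import Mathlib

section
/- A semigroup S satisfies the identity x = xyx for all x, y ∈ S if and only if every bijection φ : S → S is a permutation matching of S. -/
/-- A semigroup satisfies x = xyx (is a rectangular band) iff every bijection of it is a
permutation matching. -/
theorem rectangular_band_iff_every_bijection_matching {S : Type*} [Semigroup S] :
    (∀ x y : S, x = x * y * x) ↔
      ∀ φ : Equiv.Perm S, ∀ a : S, a * φ a * a = a ∧ φ a * a * φ a = φ a := by
  constructor
  · intro h φ a
    exact ⟨(h a (φ a)).symm, (h (φ a) a).symm⟩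
  · intro h x y
    classical
    by_cases hxy : x = y
    · subst hxy
      exact ((h 1 x).1).symm
    · have := (h (Equiv.swap x y) x).1
      rw [Equiv.swap_apply_left] at this
      exact this.symm
end

section
/- Let B be the 7-element semigroup consisting of a zero element 0 together with the set {(i,j) : 1 ≤ i ≤ 2, 1 ≤ j ≤ 3}, with multiplication (i,j)(k,l) = (i,l) if (k,j) ∈ E and (i,j)(k,l) = 0 otherwise, where E = {(1,2),(1,3),(2,1)}, and all products involving 0 equal 0. Then B is a regular semigroup that has no permutation matching. -/
/-- Multiplication of the 7-element 0-rectangular band `B` with rows {1,2} (here 0,1),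
columns {1,2,3} (here 0,1,2), and idempotent positions E = {(1,2),(1,3),(2,1)}
(here {(0,1),(0,2),(1,0)}); `none` is the zero. -/
def Bmul (x y : Option (Fin 2 × Fin 3)) : Option (Fin 2 × Fin 3) :=
  match x, y with
  | some (i, j), some (k, l) =>
      if (k, j) ∈ ({((0 : Fin 2), (1 : Fin 3)), (0, 2), (1, 0)} : Finset (Fin 2 × Fin 3))
      then some (i, l) else none
  | _, _ => none

set_option maxRecDepth 4000 in
lemma Bmul_key (a b : Option (Fin 2 × Fin 3))
    (h : a = some (1, 0) ∨ a = some (1, 1) ∨ a = some (1, 2))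
    (h1 : Bmul (Bmul a b) a = a) :
    b = some (0, 0) ∨ b = some (1, 0) := by
  revert h1 h; revert a b; decide

/-- `B` is a regular semigroup possessing no permutation matching. -/
theorem seven_element_band_no_matching :
    (∀ x y z : Option (Fin 2 × Fin 3), Bmul (Bmul x y) z = Bmul x (Bmul y z)) ∧
    (∀ a : Option (Fin 2 × Fin 3), ∃ b, Bmul (Bmul a b) a = a ∧ Bmul (Bmul b a) b = b) ∧
    ¬ ∃ φ : Equiv.Perm (Option (Fin 2 × Fin 3)),
        ∀ a, Bmul (Bmul a (φ a)) a = a ∧ Bmul (Bmul (φ a) a) (φ a) = φ a := by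
  refine ⟨by decide, by decide, ?_⟩
  rintro ⟨φ, hφ⟩
  have k1 := Bmul_key (some (1, 0)) (φ (some (1, 0))) (Or.inl rfl) (hφ _).1
  have k2 := Bmul_key (some (1, 1)) (φ (some (1, 1))) (Or.inr (Or.inl rfl)) (hφ _).1
  have k3 := Bmul_key (some (1, 2)) (φ (some (1, 2))) (Or.inr (Or.inr rfl)) (hφ _).1
  rcases k1 with h1 | h1 <;> rcases k2 with h2 | h2 <;> rcases k3 with h3 | h3 <;>
    first
    | exact absurd (φ.injective (h1.trans h2.symm)) (by decide)
    | exact absurd (φ.injective (h1.trans h3.symm)) (by decide)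
    | exact absurd (φ.injective (h2.trans h3.symm)) (by decide)
end

section
/- If a finite regular semigroup S has a permutation matching, then S has a permutation matching φ that preserves Green's H-relation: a H b implies φ(a) H φ(b). -/
/-- Green's L-relation: a L b iff S¹a = S¹b. -/
def GreenL {S : Type*} [Semigroup S] (a b : S) : Prop :=
  ({a} ∪ {x | ∃ s, x = s * a} : Set S) = {b} ∪ {x | ∃ s, x = s * b}

/-- Green's R-relation: a R b iff aS¹ = bS¹. -/
def GreenR {S : Type*} [Semigroup S] (a b : S) : Prop :=
  ({a} ∪ {x | ∃ s, x = a * s} : Set S) = {b} ∪ {x | ∃ s, x = b * s}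

/-- Green's H-relation. -/
def GreenH {S : Type*} [Semigroup S] (a b : S) : Prop := GreenL a b ∧ GreenR a b

namespace MatchH

variable {S : Type*} [Semigroup S]

/-- a ∈ S¹ b -/
def leL (a b : S) : Prop := a = b ∨ ∃ s, a = s * b

/-- a ∈ b S¹ -/
def leR (a b : S) : Prop := a = b ∨ ∃ s, a = b * s

lemma leL.trans {a b c : S} (h1 : leL a b) (h2 : leL b c) : leL a c := by
  rcases h1 with rfl | ⟨s, rfl⟩
  · exact h2
  · rcases h2 with rfl | ⟨t, rfl⟩
    · exact Or.inr ⟨s, rfl⟩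
    · exact Or.inr ⟨s * t, (mul_assoc _ _ _).symm⟩

lemma leR.trans {a b c : S} (h1 : leR a b) (h2 : leR b c) : leR a c := by
  rcases h1 with rfl | ⟨s, rfl⟩
  · exact h2
  · rcases h2 with rfl | ⟨t, rfl⟩
    · exact Or.inr ⟨s, rfl⟩
    · exact Or.inr ⟨t * s, (mul_assoc _ _ _)⟩

lemma greenL_iff {a b : S} : GreenL a b ↔ leL a b ∧ leL b a := by
  constructor
  · intro h
    constructor
    · have h1 : a ∈ ({b} ∪ {x | ∃ s, x = s * b} : Set S) := by
        rw [← h]; exact Set.mem_union_left _ rfl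
      simpa [leL, Set.mem_union] using h1
    · have h1 : b ∈ ({a} ∪ {x | ∃ s, x = s * a} : Set S) := by
        rw [h]; exact Set.mem_union_left _ rfl
      simpa [leL, Set.mem_union] using h1
  · rintro ⟨hab, hba⟩
    ext z
    simp only [Set.mem_union, Set.mem_singleton_iff, Set.mem_setOf_eq]
    constructor
    · rintro (rfl | ⟨s, rfl⟩)
      · exact hab
      · exact leL.trans (Or.inr ⟨s, rfl⟩) hab
    · rintro (rfl | ⟨s, rfl⟩)
      · exact hba
      · exact leL.trans (Or.inr ⟨s, rfl⟩) hba

lemma greenR_iff {a b : S} : GreenR a b ↔ leR a b ∧ leR b a := by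
  constructor
  · intro h
    constructor
    · have h1 : a ∈ ({b} ∪ {x | ∃ s, x = b * s} : Set S) := by
        rw [← h]; exact Set.mem_union_left _ rfl
      simpa [leR, Set.mem_union] using h1
    · have h1 : b ∈ ({a} ∪ {x | ∃ s, x = a * s} : Set S) := by
        rw [h]; exact Set.mem_union_left _ rfl
      simpa [leR, Set.mem_union] using h1
  · rintro ⟨hab, hba⟩
    ext z
    simp only [Set.mem_union, Set.mem_singleton_iff, Set.mem_setOf_eq]
    constructor
    · rintro (rfl | ⟨s, rfl⟩)
      · exact hab
      · exact leR.trans (Or.inr ⟨s, rfl⟩) hab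
    · rintro (rfl | ⟨s, rfl⟩)
      · exact hba
      · exact leR.trans (Or.inr ⟨s, rfl⟩) hba

lemma greenH_refl (a : S) : GreenH a a := ⟨rfl, rfl⟩

lemma greenH_symm {a b : S} (h : GreenH a b) : GreenH b a :=
  ⟨Eq.symm h.1, Eq.symm h.2⟩

lemma greenH_trans {a b c : S} (h1 : GreenH a b) (h2 : GreenH b c) : GreenH a c :=
  ⟨Eq.trans h1.1 h2.1, Eq.trans h1.2 h2.2⟩

/-- Two H-equivalent idempotents are equal. -/
lemma idem_eq {e f : S} (he : e * e = e) (hf : f * f = f) (hH : GreenH e f) : e = f := by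
  obtain ⟨hLef, _⟩ := greenL_iff.mp hH.1
  obtain ⟨_, hRfe⟩ := greenR_iff.mp hH.2
  have h1 : e * f = e := by
    rcases hLef with rfl | ⟨s, rfl⟩
    · exact hf
    · rw [mul_assoc, hf]
  have h2 : e * f = f := by
    rcases hRfe with rfl | ⟨t, rfl⟩
    · exact he
    · rw [← mul_assoc, he]
  exact h1.symm.trans h2

/-- Two H-equivalent inverses of the same element are equal. -/
lemma inv_unique {a b b' : S} (h1 : a * b * a = a) (h2 : b * a * b = b)
    (h3 : a * b' * a = a) (h4 : b' * a * b' = b') (hH : GreenH b b') : b = b' := by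
  obtain ⟨hLb, hLb'⟩ := greenL_iff.mp hH.1
  obtain ⟨hRb, hRb'⟩ := greenR_iff.mp hH.2
  -- the idempotents b*a and b'*a are H-equivalent
  have hee : (b * a) * (b * a) = b * a := by rw [← mul_assoc, h2]
  have he'e' : (b' * a) * (b' * a) = b' * a := by rw [← mul_assoc, h4]
  have heL : leL (b * a) (b' * a) := by
    rcases hLb with rfl | ⟨s, hs⟩
    · exact Or.inl rfl
    · exact Or.inr ⟨s, by rw [hs, mul_assoc]⟩
  have heL' : leL (b' * a) (b * a) := by
    rcases hLb' with rfl | ⟨s, hs⟩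
    · exact Or.inl rfl
    · exact Or.inr ⟨s, by rw [hs, mul_assoc]⟩
  have heR : leR (b * a) (b' * a) :=
    leR.trans (Or.inr ⟨a, rfl⟩ : leR (b * a) b)
      (leR.trans hRb (Or.inr ⟨b', h4.symm⟩ : leR b' (b' * a)))
  have heR' : leR (b' * a) (b * a) :=
    leR.trans (Or.inr ⟨a, rfl⟩ : leR (b' * a) b')
      (leR.trans hRb' (Or.inr ⟨b, h2.symm⟩ : leR b (b * a)))
  have he : b * a = b' * a :=
    idem_eq hee he'e' ⟨greenL_iff.mpr ⟨heL, heL'⟩, greenR_iff.mpr ⟨heR, heR'⟩⟩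
  -- the idempotents a*b and a*b' are H-equivalent
  have hff : (a * b) * (a * b) = a * b := by rw [← mul_assoc, h1]
  have hf'f' : (a * b') * (a * b') = a * b' := by rw [← mul_assoc, h3]
  have hfR : leR (a * b) (a * b') := by
    rcases hRb with rfl | ⟨s, hs⟩
    · exact Or.inl rfl
    · exact Or.inr ⟨s, by rw [hs, mul_assoc]⟩
  have hfR' : leR (a * b') (a * b) := by
    rcases hRb' with rfl | ⟨s, hs⟩
    · exact Or.inl rfl
    · exact Or.inr ⟨s, by rw [hs, mul_assoc]⟩
  have hfL : leL (a * b) (a * b') :=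
    leL.trans (Or.inr ⟨a, rfl⟩ : leL (a * b) b)
      (leL.trans hLb (Or.inr ⟨b', by rw [← mul_assoc]; exact h4.symm⟩ : leL b' (a * b')))
  have hfL' : leL (a * b') (a * b) :=
    leL.trans (Or.inr ⟨a, rfl⟩ : leL (a * b') b')
      (leL.trans hLb' (Or.inr ⟨b, by rw [← mul_assoc]; exact h2.symm⟩ : leL b (a * b)))
  have hf : a * b = a * b' :=
    idem_eq hff hf'f' ⟨greenL_iff.mpr ⟨hfL, hfL'⟩, greenR_iff.mpr ⟨hfR, hfR'⟩⟩
  calc b = b * a * b := h2.symm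
    _ = b * (a * b) := mul_assoc _ _ _
    _ = b * (a * b') := by rw [hf]
    _ = b * a * b' := (mul_assoc _ _ _).symm
    _ = b' * a * b' := by rw [he]
    _ = b' := h4

/-- Existence: if a H x and b is an inverse of x, then a has an inverse H-equivalent
to b, namely (b*x)*c*(x*b) for any inverse c of a. -/
lemma exists_inv {a x b c : S} (hx1 : x * b * x = x) (hx2 : b * x * b = b)
    (hc1 : a * c * a = a) (hc2 : c * a * c = c) (hH : GreenH a x) :
    ∃ y : S, (a * y * a = a ∧ y * a * y = y) ∧ GreenH y b := by
  obtain ⟨hLax, hLxa⟩ := greenL_iff.mp hH.1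
  obtain ⟨hRax, hRxa⟩ := greenR_iff.mp hH.2
  -- F1 : a * (b*x) = a
  have F1 : a * (b * x) = a := by
    rcases hLax with rfl | ⟨s, rfl⟩
    · rw [← mul_assoc]; exact hx1
    · calc s * x * (b * x) = s * (x * b * x) := by simp only [mul_assoc]
        _ = s * x := by rw [hx1]
  -- F2 : (x*b) * a = a
  have F2 : x * b * a = a := by
    rcases hRax with rfl | ⟨u, rfl⟩
    · exact hx1
    · calc x * b * (x * u) = x * b * x * u := by simp only [mul_assoc]
        _ = x * u := by rw [hx1]
  -- F3 : b*x*c*a = b*x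
  have F3 : b * x * c * a = b * x := by
    rcases hLxa with rfl | ⟨t, rfl⟩
    · calc b * x * c * x = b * (x * c * x) := by simp only [mul_assoc]
        _ = b * x := by rw [hc1]
    · calc b * (t * a) * c * a = b * t * (a * c * a) := by simp only [mul_assoc]
        _ = b * t * a := by rw [hc1]
        _ = b * (t * a) := by simp only [mul_assoc]
  -- F4 : a*c*(x*b) = x*b
  have F4 : a * c * (x * b) = x * b := by
    rcases hRxa with rfl | ⟨u, rfl⟩
    · calc x * c * (x * b) = x * c * x * b := by simp only [mul_assoc]
        _ = x * b := by rw [hc1]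
    · calc a * c * (a * u * b) = a * c * a * (u * b) := by simp only [mul_assoc]
        _ = a * (u * b) := by rw [hc1]
        _ = a * u * b := by simp only [mul_assoc]
  refine ⟨b * x * c * (x * b), ⟨?_, ?_⟩, ?_, ?_⟩
  case _ =>
    -- a * y * a = a
    have hay : a * (b * x * c * (x * b)) = x * b := by
      calc a * (b * x * c * (x * b)) = a * (b * x) * (c * (x * b)) := by
            simp only [mul_assoc]
        _ = a * (c * (x * b)) := by rw [F1]
        _ = a * c * (x * b) := by simp only [mul_assoc]
        _ = x * b := F4
    rw [hay]; exact F2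
  case _ =>
    -- y * a * y = y
    have hya : b * x * c * (x * b) * a = b * x := by
      calc b * x * c * (x * b) * a = b * x * c * (x * b * a) := by simp only [mul_assoc]
        _ = b * x * c * a := by rw [F2]
        _ = b * x := F3
    rw [hya]
    calc b * x * (b * x * c * (x * b)) = b * x * b * (x * c * (x * b)) := by
          simp only [mul_assoc]
      _ = b * (x * c * (x * b)) := by rw [hx2]
      _ = b * x * c * (x * b) := by simp only [mul_assoc]
  case _ =>
    -- GreenL y b
    have hay : a * (b * x * c * (x * b)) = x * b := by
      calc a * (b * x * c * (x * b)) = a * (b * x) * (c * (x * b)) := by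
            simp only [mul_assoc]
        _ = a * (c * (x * b)) := by rw [F1]
        _ = a * c * (x * b) := by simp only [mul_assoc]
        _ = x * b := F4
    refine greenL_iff.mpr ⟨?_, ?_⟩
    · exact leL.trans (Or.inr ⟨b * x * c, rfl⟩ : leL (b * x * c * (x * b)) (x * b))
        (Or.inr ⟨x, rfl⟩)
    · exact leL.trans (Or.inr ⟨b, by rw [← mul_assoc]; exact hx2.symm⟩ : leL b (x * b))
        (Or.inr ⟨a, hay.symm⟩)
  case _ =>
    -- GreenR y b
    have hya : b * x * c * (x * b) * a = b * x := by
      calc b * x * c * (x * b) * a = b * x * c * (x * b * a) := by simp only [mul_assoc]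
        _ = b * x * c * a := by rw [F2]
        _ = b * x := F3
    refine greenR_iff.mpr ⟨?_, ?_⟩
    · exact leR.trans (Or.inr ⟨c * (x * b), by simp only [mul_assoc]⟩ :
        leR (b * x * c * (x * b)) (b * x)) (Or.inr ⟨x, rfl⟩)
    · exact leR.trans (Or.inr ⟨b, hx2.symm⟩ : leR b (b * x))
        (Or.inr ⟨a, hya.symm⟩)

end MatchH

noncomputable section CardSection

open MatchH Finset

open scoped Classical

variable {S : Type*} [Semigroup S] [Fintype S]

/-- The setoid of Green's H-relation. -/
def hS (S : Type*) [Semigroup S] : Setoid S :=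
  ⟨GreenH, ⟨greenH_refl, greenH_symm, fun h1 h2 => greenH_trans h1 h2⟩⟩

/-- Class of `a` in the quotient. -/
def Qm {S : Type*} [Semigroup S] (a : S) : Quotient (hS S) := Quotient.mk (hS S) a

/-- The H-class of `q` as a finset. -/
def Cl (q : Quotient (hS S)) : Finset S := Finset.univ.filter (fun a => Qm a = q)

lemma mem_Cl {a : S} {q : Quotient (hS S)} : a ∈ Cl q ↔ Qm a = q := by
  simp [Cl]

lemma Cl_nonempty (q : Quotient (hS S)) : (Cl q).Nonempty := by
  obtain ⟨a, rfl⟩ := q.exists_rep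
  exact ⟨a, mem_Cl.mpr rfl⟩

/-- Adjacent H-classes (via an inverse pair) have equal cardinality: ≤ direction. -/
lemma card_Cl_le (hreg : ∀ a : S, ∃ b : S, a * b * a = a ∧ b * a * b = b)
    {x b : S} (hx1 : x * b * x = x) (hx2 : b * x * b = b) :
    (Cl (Qm x)).card ≤ (Cl (Qm b)).card := by
  have hex : ∀ a : S, GreenH a x → ∃ y : S, (a * y * a = a ∧ y * a * y = y) ∧ GreenH y b := by
    intro a ha
    obtain ⟨c, hc1, hc2⟩ := hreg a
    exact exists_inv hx1 hx2 hc1 hc2 ha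
  set g : S → S := fun a => if h : GreenH a x then (hex a h).choose else b with hg
  have hgspec : ∀ a : S, ∀ h : GreenH a x,
      (a * g a * a = a ∧ g a * a * g a = g a) ∧ GreenH (g a) b := by
    intro a h
    simp only [hg, dif_pos h]
    exact (hex a h).choose_spec
  apply Finset.card_le_card_of_injOn g
  · intro a ha
    have hax : GreenH a x := Quotient.exact (mem_Cl.mp ha)
    exact mem_Cl.mpr (Quotient.sound ((hgspec a hax).2))
  · intro a1 h1 a2 h2 hgeq
    have hx1' : GreenH a1 x := Quotient.exact (mem_Cl.mp h1)
    have hx2' : GreenH a2 x := Quotient.exact (mem_Cl.mp h2)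
    obtain ⟨⟨p1, q1⟩, _⟩ := hgspec a1 hx1'
    obtain ⟨⟨p2, q2⟩, _⟩ := hgspec a2 hx2'
    rw [hgeq] at p1 q1
    exact inv_unique q1 p1 q2 p2 (greenH_trans hx1' (greenH_symm hx2'))

lemma card_Cl_eq (hreg : ∀ a : S, ∃ b : S, a * b * a = a ∧ b * a * b = b)
    {x b : S} (hx1 : x * b * x = x) (hx2 : b * x * b = b) :
    (Cl (Qm x)).card = (Cl (Qm b)).card := by
  refine le_antisymm (card_Cl_le hreg hx1 hx2) (card_Cl_le hreg ?_ ?_)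
  · exact hx2
  · exact hx1

/-- Neighborhood of an H-class under a matching φ. -/
def tn (φ : S → S) (q : Quotient (hS S)) : Finset (Quotient (hS S)) :=
  (Cl q).image (fun a => Qm (φ a))

lemma card_of_mem_tn (hreg : ∀ a : S, ∃ b : S, a * b * a = a ∧ b * a * b = b)
    {φ : S → S} (hφ : ∀ a : S, a * φ a * a = a ∧ φ a * a * φ a = φ a)
    {q q' : Quotient (hS S)} (h : q' ∈ tn φ q) : (Cl q').card = (Cl q).card := by
  obtain ⟨a, ha, rfl⟩ := Finset.mem_image.mp h
  have hq : Qm a = q := mem_Cl.mp ha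
  rw [← hq]
  exact (card_Cl_eq hreg (hφ a).1 (hφ a).2).symm

/-- Hall's condition for the neighborhood map. -/
lemma hall_condition (hreg : ∀ a : S, ∃ b : S, a * b * a = a ∧ b * a * b = b)
    (φ : Equiv.Perm S) (hφ : ∀ a : S, a * φ a * a = a ∧ φ a * a * φ a = φ a)
    (A : Finset (Quotient (hS S))) : A.card ≤ (A.biUnion (tn φ)).card := by
  set B := A.biUnion (tn φ) with hB
  have key : ∀ n : ℕ, (A.filter (fun q => (Cl q).card = n)).card ≤
      (B.filter (fun q => (Cl q).card = n)).card := by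
    intro n
    rcases Nat.eq_zero_or_pos n with rfl | hn
    · have hempty : A.filter (fun q => (Cl q).card = 0) = ∅ := by
        refine Finset.filter_eq_empty_iff.mpr ?_
        intro q _
        exact (Finset.card_pos.mpr (Cl_nonempty q)).ne'
      rw [hempty]
      simp
    · set An := A.filter (fun q => (Cl q).card = n) with hAn
      set Bn := B.filter (fun q => (Cl q).card = n) with hBn
      have hdisj : ∀ q q' : Quotient (hS S), q ≠ q' → Disjoint (Cl q) (Cl q') := by
        intro q q' hne
        refine Finset.disjoint_left.mpr ?_
        intro a ha ha'
        exact hne ((mem_Cl.mp ha).symm.trans (mem_Cl.mp ha'))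
      have c1 : (An.biUnion Cl).card = n * An.card := by
        rw [Finset.card_biUnion (fun q _ q' _ hne => hdisj q q' hne)]
        rw [Finset.sum_congr rfl (fun q hq => (Finset.mem_filter.mp hq).2)]
        simp [mul_comm]
        exact Or.inl rfl
      have c2 : (Bn.biUnion Cl).card = n * Bn.card := by
        rw [Finset.card_biUnion (fun q _ q' _ hne => hdisj q q' hne)]
        rw [Finset.sum_congr rfl (fun q hq => (Finset.mem_filter.mp hq).2)]
        simp [mul_comm]
        exact Or.inl rfl
      have cle : (An.biUnion Cl).card ≤ (Bn.biUnion Cl).card := by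
        apply Finset.card_le_card_of_injOn φ
        · intro a ha
          obtain ⟨q, hqAn, haq⟩ := Finset.mem_biUnion.mp ha
          obtain ⟨hqA, hqn⟩ := Finset.mem_filter.mp hqAn
          refine Finset.mem_biUnion.mpr ⟨Qm (φ a), ?_, mem_Cl.mpr rfl⟩
          have htn : Qm (φ a) ∈ tn φ q := Finset.mem_image.mpr ⟨a, haq, rfl⟩
          refine Finset.mem_filter.mpr ⟨?_, ?_⟩
          · exact Finset.mem_biUnion.mpr ⟨q, hqA, htn⟩
          · rw [card_of_mem_tn hreg hφ htn, hqn]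
        · exact Function.Injective.injOn φ.injective
      have := c1 ▸ c2 ▸ cle
      exact Nat.le_of_mul_le_mul_left this hn
  have hAcard : A.card = ∑ n ∈ Finset.range (Fintype.card S + 1),
      (A.filter (fun q => (Cl q).card = n)).card := by
    apply Finset.card_eq_sum_card_fiberwise
    intro q _
    exact Finset.mem_range.mpr (Nat.lt_succ_of_le (Finset.card_le_univ _))
  have hBcard : B.card = ∑ n ∈ Finset.range (Fintype.card S + 1),
      (B.filter (fun q => (Cl q).card = n)).card := by
    apply Finset.card_eq_sum_card_fiberwise
    intro q _
    exact Finset.mem_range.mpr (Nat.lt_succ_of_le (Finset.card_le_univ _))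
  rw [hAcard, hBcard]
  exact Finset.sum_le_sum (fun n _ => key n)

end CardSection

/-- If a finite regular semigroup has a permutation matching, it has one preserving
Green's H-relation. -/
theorem matching_preserving_H {S : Type*} [Semigroup S] [Finite S]
    (hreg : ∀ a : S, ∃ b : S, a * b * a = a ∧ b * a * b = b)
    (h : ∃ φ : Equiv.Perm S, ∀ a : S, a * φ a * a = a ∧ φ a * a * φ a = φ a) :
    ∃ φ : Equiv.Perm S, (∀ a : S, a * φ a * a = a ∧ φ a * a * φ a = φ a) ∧
      ∀ a b : S, GreenH a b → GreenH (φ a) (φ b) := by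
  classical
  obtain ⟨φ, hφ⟩ := h
  letI : Fintype S := Fintype.ofFinite S
  obtain ⟨M, hMinj, hMt⟩ :=
    (Finset.all_card_le_biUnion_card_iff_exists_injective (tn (φ : S → S))).mp
      (hall_condition hreg φ hφ)
  have hP : ∀ a : S, ∃ y : S, (a * y * a = a ∧ y * a * y = y) ∧ Qm y = M (Qm a) := by
    intro a
    obtain ⟨x, hx, hqx⟩ := Finset.mem_image.mp (hMt (Qm a))
    have hax : GreenH a x := MatchH.greenH_symm (Quotient.exact (mem_Cl.mp hx))
    obtain ⟨c, hc1, hc2⟩ := hreg a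
    obtain ⟨y, hy, hyb⟩ := MatchH.exists_inv (hφ x).1 (hφ x).2 hc1 hc2 hax
    exact ⟨y, hy, (Quotient.sound hyb).trans hqx⟩
  choose ψ hψ1 hψ2 using hP
  have hinj : Function.Injective ψ := by
    intro a1 a2 hp
    have hq : Qm a1 = Qm a2 := hMinj (by rw [← hψ2 a1, ← hψ2 a2, hp])
    have hH : GreenH a1 a2 := Quotient.exact hq
    have p1 := (hψ1 a1).1
    have q1 := (hψ1 a1).2
    have p2 := (hψ1 a2).1
    have q2 := (hψ1 a2).2
    rw [hp] at p1 q1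
    exact MatchH.inv_unique q1 p1 q2 p2 hH
  have hbij : Function.Bijective ψ := Finite.injective_iff_bijective.mp hinj
  refine ⟨Equiv.ofBijective ψ hbij, fun a => hψ1 a, fun a b hab => ?_⟩
  have hq : Qm a = Qm b := Quotient.sound hab
  have : Qm (ψ a) = Qm (ψ b) := by rw [hψ2 a, hψ2 b, hq]
  exact Quotient.exact this
end

section
/- Let S be a finite set and suppose V : S → Set S is a symmetric relation's neighborhood map (b ∈ V(a) iff a ∈ V(b)). If there is a bijection φ : S → S with φ(a) ∈ V(a) for all a, and every cycle of φ either has even length or contains a fixed point candidate e with e ∈ V(e), then there exists an involution ψ : S → S with ψ(a) ∈ V(a) for all a. -/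
private lemma perm_mem_periodicPts' {S : Type*} [Finite S] (φ : Equiv.Perm S) (a : S) :
    a ∈ Function.periodicPts ⇑φ := by
  refine ⟨orderOf φ, orderOf_pos φ, ?_⟩
  show (⇑φ)^[orderOf φ] a = a
  rw [Equiv.Perm.iterate_eq_pow, pow_orderOf_eq_one, Equiv.Perm.one_apply]

private lemma sameCycle_minper' {S : Type*} [Finite S] (φ : Equiv.Perm S) {a b : S}
    (h : φ.SameCycle a b) :
    Function.minimalPeriod ⇑φ a = Function.minimalPeriod ⇑φ b := by
  obtain ⟨i, rfl⟩ := h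
  have key : ∀ m : ℕ, Function.IsPeriodicPt ⇑φ m a ↔ Function.IsPeriodicPt ⇑φ m ((φ ^ i) a) := by
    intro m
    have comm : (φ ^ (m : ℕ)) ((φ ^ i) a) = (φ ^ i) ((φ ^ (m : ℕ)) a) := by
      rw [← Equiv.Perm.mul_apply, ← Equiv.Perm.mul_apply, ← zpow_natCast, ← zpow_add, ← zpow_add,
        add_comm]
    unfold Function.IsPeriodicPt Function.IsFixedPt
    simp only [Equiv.Perm.iterate_eq_pow]
    rw [comm, (Equiv.injective (φ ^ i)).eq_iff]
  exact Nat.dvd_antisymm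
    (Function.IsPeriodicPt.minimalPeriod_dvd
      ((key _).mpr (Function.isPeriodicPt_minimalPeriod _ _)))
    (Function.IsPeriodicPt.minimalPeriod_dvd
      ((key _).mp (Function.isPeriodicPt_minimalPeriod _ _)))

/-- If a finite set has a bijection φ with φ(a) ∈ V(a) (V a symmetric neighbourhood map),
and every cycle of φ is even or contains a point e with e ∈ V(e), then there is an
involution ψ with ψ(a) ∈ V(a). -/
theorem involution_from_matching_with_good_cycles {S : Type*} [Finite S]
    (V : S → Set S) (hsymm : ∀ a b : S, b ∈ V a ↔ a ∈ V b)
    (φ : Equiv.Perm S) (hφ : ∀ a : S, φ a ∈ V a)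
    (hcyc : ∀ a : S, Even (Function.minimalPeriod (⇑φ) a) ∨
      ∃ e : S, φ.SameCycle a e ∧ e ∈ V e) :
    ∃ ψ : S → S, (∀ a, ψ (ψ a) = a) ∧ ∀ a, ψ a ∈ V a := by
  classical
  set n : S → ℕ := fun a => Function.minimalPeriod ⇑φ a with hn_def
  have hVinv : ∀ a : S, φ⁻¹ a ∈ V a := by
    intro a
    have h := hφ (φ⁻¹ a)
    rw [show φ (φ⁻¹ a) = a from φ.apply_symm_apply a] at h
    exact (hsymm a (φ⁻¹ a)).mpr h
  -- the quotient by cycles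
  let sd : Setoid S := ⟨φ.SameCycle,
    ⟨fun x => Equiv.Perm.SameCycle.refl φ x, fun h => h.symm, fun h1 h2 => h1.trans h2⟩⟩
  have hout : ∀ a : S, φ.SameCycle (Quotient.mk sd a).out a := fun a => @Quotient.mk_out S sd a
  have hcyc2 : ∀ b : S, ¬ Even (n b) → ∃ e : S, φ.SameCycle b e ∧ e ∈ V e :=
    fun b hb => (hcyc b).resolve_left hb
  -- representative of each cycle
  let F : Quotient sd → S := fun q =>
    if h : Even (n q.out) then q.out else Classical.choose (hcyc2 q.out h)
  set rep : S → S := fun a => F (Quotient.mk sd a) with hrep_def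
  have hn_sc : ∀ {a b : S}, φ.SameCycle a b → n a = n b := fun h => sameCycle_minper' φ h
  have hF : ∀ q : Quotient sd, (Even (n q.out) → F q = q.out) ∧
      (¬ Even (n q.out) → φ.SameCycle q.out (F q) ∧ F q ∈ V (F q)) := by
    intro q
    constructor
    · intro h; exact dif_pos h
    · intro h
      have he : F q = Classical.choose (hcyc2 q.out h) := dif_neg h
      rw [he]
      exact Classical.choose_spec (hcyc2 q.out h)
  have hrep_sc : ∀ a : S, φ.SameCycle (rep a) a := by
    intro a
    show φ.SameCycle (F (Quotient.mk sd a)) a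
    by_cases h : Even (n (Quotient.mk sd a).out)
    · rw [(hF _).1 h]; exact hout a
    · exact (((hF _).2 h).1).symm.trans (hout a)
  have hrep_good : ∀ a : S, ¬ Even (n a) → rep a ∈ V (rep a) := by
    intro a ha
    have h : ¬ Even (n (Quotient.mk sd a).out) := by
      rw [hn_sc (hout a)]; exact ha
    show F (Quotient.mk sd a) ∈ V (F (Quotient.mk sd a))
    exact ((hF _).2 h).2
  have hsc_phi : ∀ a : S, φ.SameCycle a (φ a) := fun a => ⟨1, by simp⟩
  have hrep_phi : ∀ a : S, rep (φ a) = rep a := by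
    intro a
    show F (Quotient.mk sd (φ a)) = F (Quotient.mk sd a)
    exact congrArg F (Quotient.sound ((hsc_phi a).symm : sd.r (φ a) a))
  have hn_phi : ∀ a : S, n (φ a) = n a := fun a => (hn_sc (hsc_phi a)).symm
  have hn_rep : ∀ a : S, n (rep a) = n a := fun a => hn_sc (hrep_sc a)
  have hn_pos : ∀ a : S, 0 < n a :=
    fun a => Function.minimalPeriod_pos_of_mem_periodicPts (perm_mem_periodicPts' φ a)
  -- index within the cycle
  have hex : ∀ a : S, ∃ i : ℕ, (⇑φ)^[i] (rep a) = a := by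
    intro a
    obtain ⟨i, _, hi⟩ := (hrep_sc a).exists_pow_eq'
    exact ⟨i, by rw [Equiv.Perm.iterate_eq_pow]; exact hi⟩
  set k : S → ℕ := fun a => Nat.find (hex a) with hk_def
  have hk_spec : ∀ a : S, (⇑φ)^[k a] (rep a) = a := fun a => Nat.find_spec (hex a)
  have hmod : ∀ (a : S) (m : ℕ), (⇑φ)^[m % n a] (rep a) = (⇑φ)^[m] (rep a) := by
    intro a m
    have := Function.iterate_mod_minimalPeriod_eq (f := ⇑φ) (x := rep a) (n := m)
    rwa [show Function.minimalPeriod ⇑φ (rep a) = n a from hn_rep a] at this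
  have hk_lt : ∀ a : S, k a < n a := by
    intro a
    obtain ⟨j, hj⟩ := hex a
    have hle : k a ≤ j % n a := Nat.find_le (by rw [hmod]; exact hj)
    exact lt_of_le_of_lt hle (Nat.mod_lt _ (hn_pos a))
  have hk_uniq : ∀ (a : S) (i : ℕ), i < n a → (⇑φ)^[i] (rep a) = a → i = k a := by
    intro a i hi hia
    have hinj := Function.iterate_injOn_Iio_minimalPeriod (f := ⇑φ) (x := rep a)
    rw [show Function.minimalPeriod ⇑φ (rep a) = n a from hn_rep a] at hinj
    refine hinj (Set.mem_Iio.mpr hi) (Set.mem_Iio.mpr (hk_lt a)) ?_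
    show (⇑φ)^[i] (rep a) = (⇑φ)^[k a] (rep a)
    rw [hia, hk_spec]
  have hk_phi : ∀ a : S, k (φ a) = (k a + 1) % n a := by
    intro a
    refine (hk_uniq (φ a) ((k a + 1) % n a) ?_ ?_).symm
    · rw [hn_phi]; exact Nat.mod_lt _ (hn_pos a)
    · rw [hrep_phi, hmod, Function.iterate_succ_apply', hk_spec]
  -- the involution
  refine ⟨fun a => if Even (n a) then (if Even (k a) then φ a else φ⁻¹ a)
      else (if k a = 0 then a else if Even (k a) then φ⁻¹ a else φ a), ?_, ?_⟩
  · intro a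
    beta_reduce
    by_cases hne : Even (n a)
    · rw [if_pos hne]
      by_cases hke : Even (k a)
      · rw [if_pos hke]
        have h1 : k (φ a) = k a + 1 := by
          rw [hk_phi]
          refine Nat.mod_eq_of_lt (lt_of_le_of_ne (hk_lt a) ?_)
          intro h
          rw [← h] at hne
          exact (Nat.even_add_one.mp hne) hke
        rw [if_pos (by rw [hn_phi]; exact hne), if_neg (by rw [h1]; exact Nat.even_add_one.not.mpr (by simp [hke]))]
        exact φ.symm_apply_apply a
      · rw [if_neg hke]
        set b := φ⁻¹ a with hb
        have hba : φ b = a := φ.apply_symm_apply a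
        have hnb : n b = n a := by rw [← hba, hn_phi]
        have hkab : k a = (k b + 1) % n a := by rw [← hba, hk_phi, hn_phi, hnb]
        have hkb1 : k b + 1 ≠ n a := by
          intro h
          rw [h, Nat.mod_self] at hkab
          exact hke (hkab ▸ Even.zero)
        have hkb : k a = k b + 1 := by
          rw [hkab]
          exact Nat.mod_eq_of_lt (lt_of_le_of_ne (by rw [← hnb]; exact hk_lt b) hkb1)
        have hkbe : Even (k b) := by
          rcases Nat.even_or_odd (k b) with h | h
          · exact h
          · exact absurd (hkb ▸ (Nat.even_add_one.mpr (Nat.not_even_iff_odd.mpr h))) hke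
        rw [if_pos (hnb ▸ hne), if_pos hkbe, hba]
    · rw [if_neg hne]
      by_cases h0 : k a = 0
      · rw [if_pos h0, if_neg hne, if_pos h0]
      · rw [if_neg h0]
        by_cases hke : Even (k a)
        · rw [if_pos hke]
          set b := φ⁻¹ a with hb
          have hba : φ b = a := φ.apply_symm_apply a
          have hnb : n b = n a := by rw [← hba, hn_phi]
          have hkab : k a = (k b + 1) % n a := by rw [← hba, hk_phi, hn_phi, hnb]
          have hkb1 : k b + 1 ≠ n a := by
            intro h
            rw [h, Nat.mod_self] at hkab
            exact h0 hkab
          have hkb : k a = k b + 1 := by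
            rw [hkab]
            exact Nat.mod_eq_of_lt (lt_of_le_of_ne (by rw [← hnb]; exact hk_lt b) hkb1)
          have hkbo : ¬ Even (k b) := by
            intro h
            exact (Nat.even_add_one.mp (hkb ▸ hke)) h
          have hkb0 : k b ≠ 0 := fun h => hkbo (h ▸ Even.zero)
          rw [if_neg (hnb ▸ hne), if_neg hkb0, if_neg hkbo, hba]
        · rw [if_neg hke]
          have h1 : k (φ a) = k a + 1 := by
            rw [hk_phi]
            refine Nat.mod_eq_of_lt (lt_of_le_of_ne (hk_lt a) ?_)
            intro h
            exact hne (h ▸ Nat.even_add_one.mpr hke)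
          rw [if_neg (by rw [hn_phi]; exact hne), if_neg (by rw [h1]; exact Nat.succ_ne_zero _),
            if_pos (by rw [h1]; exact Nat.even_add_one.mpr hke)]
          exact φ.symm_apply_apply a
  · intro a
    beta_reduce
    by_cases hne : Even (n a)
    · rw [if_pos hne]
      by_cases hke : Even (k a)
      · rw [if_pos hke]; exact hφ a
      · rw [if_neg hke]; exact hVinv a
    · rw [if_neg hne]
      by_cases h0 : k a = 0
      · rw [if_pos h0]
        have : rep a = a := by
          have := hk_spec a
          rwa [h0, Function.iterate_zero_apply] at this
        rw [← this]
        exact hrep_good a hne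
      · rw [if_neg h0]
        by_cases hke : Even (k a)
        · rw [if_pos hke]; exact hVinv a
        · rw [if_neg hke]; exact hφ a
end

section
/- If a finite regular semigroup S has a permutation matching but no involution matching, then every permutation matching of S contains an odd cycle none of whose elements is an idempotent. -/
open Function

namespace OddCycleAux

variable {S : Type*} [Finite S] (φ : Equiv.Perm S)

def cycSetoid : Setoid S := ⟨φ.SameCycle, Equiv.Perm.SameCycle.equivalence φ⟩

open Classical in
noncomputable def bp (P : S → Prop) (a : S) : S :=
  if h : ∃ e, φ.SameCycle ((Quotient.mk (cycSetoid φ) a).out) e ∧ P e then h.choose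
  else (Quotient.mk (cycSetoid φ) a).out

lemma sameCycle_out (a : S) : φ.SameCycle ((Quotient.mk (cycSetoid φ) a).out) a :=
  @Quotient.exact S (cycSetoid φ) _ _ (Quotient.out_eq _)

lemma bp_sameCycle (P : S → Prop) (a : S) : φ.SameCycle (bp φ P a) a := by
  unfold bp; split_ifs with h
  · exact (h.choose_spec.1).symm.trans (sameCycle_out φ a)
  · exact sameCycle_out φ a

lemma bp_eq (P : S → Prop) {a b : S} (h : φ.SameCycle a b) : bp φ P a = bp φ P b := by
  unfold bp
  rw [Quotient.sound (s := cycSetoid φ) h]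

lemma bp_prop (P : S → Prop) {a : S} (h : ∃ e, φ.SameCycle a e ∧ P e) : P (bp φ P a) := by
  unfold bp
  obtain ⟨e, he, hP⟩ := h
  have h' : ∃ e, φ.SameCycle ((Quotient.mk (cycSetoid φ) a).out) e ∧ P e :=
    ⟨e, (sameCycle_out φ a).trans he, hP⟩
  rw [dif_pos h']
  exact h'.choose_spec.2

end OddCycleAux

namespace OddCycleAux

lemma exists_involution {S : Type*} [Finite S] [Mul S] (φ : Equiv.Perm S)
    (H : ∀ a : S, Odd (minimalPeriod ⇑φ a) → ∃ e, φ.SameCycle a e ∧ e * e = e) :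
    ∃ ψ : Equiv.Perm S, (∀ a, ψ (ψ a) = a) ∧
      ∀ a, ψ a = φ a ∨ ψ a = φ⁻¹ a ∨ (ψ a = a ∧ a * a = a) := by
  classical
  set b : S → S := fun a => bp φ (fun e => e * e = e) a with hbdef
  -- every point is periodic
  have hper : ∀ a : S, a ∈ periodicPts ⇑φ := by
    intro a
    refine mk_mem_periodicPts (orderOf_pos φ) ?_
    show (⇑φ)^[orderOf φ] a = a
    rw [← Equiv.Perm.coe_pow, pow_orderOf_eq_one]; rfl
  -- minimal period is constant on cycles
  have hmp_iter : ∀ (n : ℕ) (a : S),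
      minimalPeriod ⇑φ ((⇑φ)^[n] a) = minimalPeriod ⇑φ a := by
    intro n a
    induction n with
    | zero => simp
    | succ n ih => rw [iterate_succ_apply', minimalPeriod_apply (hper _), ih]
  have hmp : ∀ a c : S, φ.SameCycle a c →
      minimalPeriod ⇑φ a = minimalPeriod ⇑φ c := by
    intro a c h
    obtain ⟨i, -, hi⟩ := h.exists_pow_eq'
    rw [← hi]
    exact (hmp_iter i a).symm
  have hb_same : ∀ a, φ.SameCycle (b a) a := fun a => bp_sameCycle φ _ a
  have hb_eq : ∀ a c, φ.SameCycle a c → b a = b c := fun a c h => bp_eq φ _ h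
  have hbφ : ∀ a, b (φ a) = b a := fun a => (hb_eq a (φ a) ⟨1, by simp⟩).symm
  have hbφ' : ∀ a, b (φ⁻¹ a) = b a := fun a => (hb_eq a (φ⁻¹ a) ⟨-1, by simp⟩).symm
  set r : S → ℕ := fun a => minimalPeriod ⇑φ (b a) with hrdef
  have hb_idem : ∀ a, Odd (r a) → b a * b a = b a := by
    intro a h
    refine bp_prop φ _ (H a ?_)
    rwa [hmp a (b a) (hb_same a).symm]
  have hrpos : ∀ a, 0 < r a := fun a => minimalPeriod_pos_of_mem_periodicPts (hper _)
  have hrb : ∀ a, (⇑φ)^[r a] (b a) = b a := fun a => iterate_minimalPeriod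
  have hrφ : ∀ a, r (φ a) = r a := by intro a; simp only [hrdef]; rw [hbφ a]
  have hrφ' : ∀ a, r (φ⁻¹ a) = r a := by intro a; simp only [hrdef]; rw [hbφ' a]
  have hex : ∀ a : S, ∃ n : ℕ, (⇑φ)^[n] (b a) = a := by
    intro a
    obtain ⟨i, -, hi⟩ := (hb_same a).exists_pow_eq'
    exact ⟨i, hi⟩
  set k : S → ℕ := fun a => Nat.find (hex a) with hkdef
  have hk : ∀ a, (⇑φ)^[k a] (b a) = a := fun a => Nat.find_spec (hex a)
  have hkmin : ∀ a n, (⇑φ)^[n] (b a) = a → k a ≤ n := fun a n h => Nat.find_min' (hex a) h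
  have hklt : ∀ a, k a < r a := by
    intro a
    by_contra h
    push_neg at h
    have h2 : (⇑φ)^[k a - r a] (b a) = a := by
      have h3 := hk a
      rwa [← Nat.sub_add_cancel h, iterate_add_apply, hrb] at h3
    have := hkmin a _ h2
    have := hrpos a
    omega
  have hk_succ : ∀ a, k a + 1 < r a → k (φ a) = k a + 1 := by
    intro a h
    have h1 : (⇑φ)^[k a + 1] (b (φ a)) = φ a := by
      rw [hbφ, iterate_succ_apply', hk a]
    have le1 : k (φ a) ≤ k a + 1 := hkmin _ _ h1
    rcases Nat.eq_zero_or_pos (k (φ a)) with h0 | hpos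
    · exfalso
      have hba : b (φ a) = φ a := by
        have h3 := hk (φ a); rwa [h0, iterate_zero_apply] at h3
      have hfix : IsPeriodicPt ⇑φ (k a + 1) (b a) := by
        show (⇑φ)^[k a + 1] (b a) = b a
        rw [iterate_succ_apply', hk a, ← hbφ a, hba]
      have hdvd : r a ∣ k a + 1 := hfix.minimalPeriod_dvd
      have := Nat.le_of_dvd (by omega) hdvd
      omega
    · have h2 : (⇑φ)^[k (φ a) - 1] (b a) = a := by
        have h3 := hk (φ a)
        rw [hbφ] at h3
        have h4 : (⇑φ) ((⇑φ)^[k (φ a) - 1] (b a)) = φ a := by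
          rw [← iterate_succ_apply' (⇑φ) (k (φ a) - 1) (b a),
            show (k (φ a) - 1).succ = k (φ a) by omega]
          exact h3
        exact φ.injective h4
      have := hkmin a _ h2
      omega
  have hk_pred : ∀ a, 1 ≤ k a → k (φ⁻¹ a) = k a - 1 := by
    intro a h
    have h1 : (⇑φ)^[k a - 1] (b (φ⁻¹ a)) = φ⁻¹ a := by
      rw [hbφ']
      apply φ.injective
      rw [← iterate_succ_apply' (⇑φ) (k a - 1) (b a),
        show (k a - 1).succ = k a by omega, hk a]
      simp
    have le1 : k (φ⁻¹ a) ≤ k a - 1 := hkmin _ _ h1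
    have h2 : (⇑φ)^[k (φ⁻¹ a) + 1] (b a) = a := by
      rw [iterate_succ_apply']
      have h3 := hk (φ⁻¹ a)
      rw [hbφ'] at h3
      rw [h3]
      simp
    have := hkmin a _ h2
    omega
  set f : S → S := fun a => if Odd (r a) ∧ k a = 0 then a
    else if k a % 2 = r a % 2 then φ a else φ⁻¹ a with hfdef
  have hinv : Involutive f := by
    intro a
    by_cases hA : Odd (r a) ∧ k a = 0
    · have h1 : f a = a := by simp only [hfdef]; rw [if_pos hA]
      rw [h1, h1]
    · rw [Nat.odd_iff] at hA
      by_cases hB : k a % 2 = r a % 2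
      · have h1 : f a = φ a := by simp only [hfdef]; rw [if_neg (by rw [Nat.odd_iff]; exact hA), if_pos hB]
        have hlt : k a + 1 < r a := by have := hklt a; omega
        have hk2 := hk_succ a hlt
        have c1 : ¬(Odd (r (φ a)) ∧ k (φ a) = 0) := by
          rw [hk2]; rintro ⟨-, h0⟩; omega
        have c2 : ¬(k (φ a) % 2 = r (φ a) % 2) := by
          rw [hk2, hrφ]; omega
        have h2 : f (φ a) = φ⁻¹ (φ a) := by
          simp only [hfdef]; rw [if_neg c1, if_neg c2]
        rw [h1, h2]; simp
      · have h1 : f a = φ⁻¹ a := by simp only [hfdef]; rw [if_neg (by rw [Nat.odd_iff]; exact hA), if_neg hB]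
        have hk1 : 1 ≤ k a := by omega
        have hk2 := hk_pred a hk1
        have c1 : ¬(Odd (r (φ⁻¹ a)) ∧ k (φ⁻¹ a) = 0) := by
          rw [hk2, hrφ', Nat.odd_iff]; rintro ⟨h1', h2'⟩; omega
        have c2 : k (φ⁻¹ a) % 2 = r (φ⁻¹ a) % 2 := by
          rw [hk2, hrφ']; omega
        have h2 : f (φ⁻¹ a) = φ (φ⁻¹ a) := by
          simp only [hfdef]; rw [if_neg c1, if_pos c2]
        rw [h1, h2]; simp
  have hprop : ∀ a, f a = φ a ∨ f a = φ⁻¹ a ∨ (f a = a ∧ a * a = a) := by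
    intro a
    by_cases hA : Odd (r a) ∧ k a = 0
    · right; right
      have h1 : f a = a := by simp only [hfdef]; rw [if_pos hA]
      refine ⟨h1, ?_⟩
      have hba : a = b a := by
        have h3 := hk a; rw [hA.2, iterate_zero_apply] at h3; exact h3.symm
      rw [show a = b a from hba]
      exact hb_idem a hA.1
    · by_cases hB : k a % 2 = r a % 2
      · left; simp only [hfdef]; rw [if_neg hA, if_pos hB]
      · right; left; simp only [hfdef]; rw [if_neg hA, if_neg hB]
  refine ⟨Function.Involutive.toPerm f hinv, fun a => hinv a, fun a => hprop a⟩

end OddCycleAux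

/-- If a finite regular semigroup has a permutation matching but no involution matching,
then every permutation matching contains an odd cycle none of whose elements is
idempotent. -/
theorem odd_idempotent_free_cycle {S : Type*} [Semigroup S] [Finite S]
    (hreg : ∀ a : S, ∃ b : S, a * b * a = a ∧ b * a * b = b)
    (hmatch : ∃ φ : Equiv.Perm S, ∀ a : S, a * φ a * a = a ∧ φ a * a * φ a = φ a)
    (hninv : ¬ ∃ φ : Equiv.Perm S, (∀ a, φ (φ a) = a) ∧
      ∀ a : S, a * φ a * a = a ∧ φ a * a * φ a = φ a) :
    ∀ φ : Equiv.Perm S, (∀ a : S, a * φ a * a = a ∧ φ a * a * φ a = φ a) →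
      ∃ a : S, Odd (Function.minimalPeriod (⇑φ) a) ∧
        ∀ b : S, φ.SameCycle a b → b * b ≠ b := by
  intro φ hφ
  by_contra hcon
  push_neg at hcon
  obtain ⟨ψ, hinv, hcases⟩ := OddCycleAux.exists_involution φ hcon
  refine hninv ⟨ψ, hinv, fun a => ?_⟩
  rcases hcases a with h | h | ⟨h, hi⟩
  · rw [h]; exact hφ a
  · rw [h]
    have h1 := (hφ (φ⁻¹ a)).1
    have h2 := (hφ (φ⁻¹ a)).2
    simp only [Equiv.Perm.inv_def, Equiv.apply_symm_apply] at h1 h2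
    exact ⟨h2, h1⟩
  · rw [h]
    exact ⟨by rw [hi, hi], by rw [hi, hi]⟩
end

section
/- Let S be a 0-rectangular band whose nonzero D-class D is an m × n array with n = am for some positive integer a, and suppose S has a permutation matching φ. Then for any set T of t rows of D (1 ≤ t ≤ m), the number of columns containing an idempotent lying in a row of T is at least ta; and for any set T of t columns (1 ≤ t ≤ n), the number of rows containing an idempotent lying in a column of T is at least t/a. -/
/-! Choosing for each nonzero `p` the element `f p` with `φ (some p) = some (f p)` gives an
injection of the `m × n` array into itself. It sends the `t·n` cells of `t` rows into the
columns meeting those rows in an idempotent, which hold `m` cells each, so `t·n ≤ m·s`;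
transposing gives the bound for columns. -/

open Function

theorem injective_of_perm_option_some {α : Type*} (φ : Equiv.Perm (Option α)) {f : α → α}
    (hf : ∀ p, φ (some p) = some (f p)) : Injective f := fun p q hpq =>
  Option.some_injective _ <| φ.injective <| by rw [hf, hf, hpq]

section
variable {R C : Type*} [Finite R] [Finite C]

theorem ncard_mul_card_le_card_mul_ncard_columns (E : Set (R × C)) {f : R × C → R × C}
    (hf : Injective f) (hE : ∀ p, (p.1, (f p).2) ∈ E) (T : Set R) :
    T.ncard * Nat.card C ≤ Nat.card R * {c | ∃ r ∈ T, (r, c) ∈ E}.ncard := by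
  have hmaps : ∀ p ∈ T ×ˢ (Set.univ : Set C),
      f p ∈ (Set.univ : Set R) ×ˢ {c | ∃ r ∈ T, (r, c) ∈ E} :=
    fun p hp => ⟨trivial, p.1, hp.1, hE p⟩
  simpa [Set.ncard_prod] using Set.ncard_le_ncard_of_injOn f hmaps hf.injOn

theorem card_mul_ncard_le_ncard_rows_mul_card (E : Set (R × C)) {f : R × C → R × C}
    (hf : Injective f) (hE : ∀ p, ((f p).1, p.2) ∈ E) (T : Set C) :
    Nat.card R * T.ncard ≤ {r | ∃ c ∈ T, (r, c) ∈ E}.ncard * Nat.card C := by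
  rw [mul_comm, mul_comm _ (Nat.card C)]
  exact ncard_mul_card_le_card_mul_ncard_columns (Prod.swap ⁻¹' E)
    (f := Prod.swap ∘ f ∘ Prod.swap) (Prod.swap_injective.comp (hf.comp Prod.swap_injective))
    (fun p => hE p.swap) T

end

theorem rows_columns_idempotent_bounds_general (m n a : ℕ) (hm : 0 < m)
    (hn : n = a * m) (E : Set (Fin m × Fin n))
    (φ : Equiv.Perm (Option (Fin m × Fin n)))
    (hφ : ∀ p : Fin m × Fin n, ∃ q : Fin m × Fin n,
      φ (some p) = some q ∧ (p.1, q.2) ∈ E ∧ (q.1, p.2) ∈ E) :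
    (∀ T : Finset (Fin m), T.Nonempty →
      T.card * a ≤ Set.ncard {c : Fin n | ∃ r ∈ T, (r, c) ∈ E}) ∧
    (∀ T : Finset (Fin n), T.Nonempty →
      T.card ≤ a * Set.ncard {r : Fin m | ∃ c ∈ T, (r, c) ∈ E}) := by
  choose f hφf hrow hcol using hφ
  have hf := injective_of_perm_option_some φ hφf
  subst hn
  refine ⟨fun T _ => ?_, fun T _ => ?_⟩
  · have h := ncard_mul_card_le_card_mul_ncard_columns E hf hrow T
    simp only [Set.ncard_coe_finset, Finset.mem_coe, Nat.card_eq_fintype_card,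
      Fintype.card_fin] at h
    exact Nat.le_of_mul_le_mul_left (by linarith) hm
  · have h := card_mul_ncard_le_ncard_rows_mul_card E hf hcol T
    simp only [Set.ncard_coe_finset, Finset.mem_coe, Nat.card_eq_fintype_card,
      Fintype.card_fin] at h
    exact Nat.le_of_mul_le_mul_left (by linarith) hm

/-- Lemma 2.2: in an m × (a·m) 0-rectangular band with idempotent set E and a permutation
matching φ, any t rows meet idempotents in at least t·a columns, and any t columns meet
idempotents in at least t/a rows. -/
theorem rows_columns_idempotent_bounds (m n a : ℕ) (hm : 0 < m) (ha : 0 < a)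
    (hn : n = a * m) (E : Set (Fin m × Fin n))
    (φ : Equiv.Perm (Option (Fin m × Fin n))) (hφ0 : φ none = none)
    (hφ : ∀ p : Fin m × Fin n, ∃ q : Fin m × Fin n,
      φ (some p) = some q ∧ (p.1, q.2) ∈ E ∧ (q.1, p.2) ∈ E) :
    (∀ T : Finset (Fin m), T.Nonempty →
      T.card * a ≤ Set.ncard {c : Fin n | ∃ r ∈ T, (r, c) ∈ E}) ∧
    (∀ T : Finset (Fin n), T.Nonempty →
      T.card ≤ a * Set.ncard {r : Fin m | ∃ c ∈ T, (r, c) ∈ E}) :=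
  rows_columns_idempotent_bounds_general m n a hm hn E φ hφ
end

section
/- Let S be a 0-rectangular band whose nonzero D-class is an m × n array with m dividing n. If S has a permutation matching, then S has an involution matching. -/
/-- If a 0-rectangular band with m rows and n columns, m ∣ n, has a permutation matching,
then it has an involution matching. -/
theorem involution_matching_of_dvd (m n : ℕ) (hm : 0 < m) (hdvd : m ∣ n)
    (E : Set (Fin m × Fin n))
    (φ : Equiv.Perm (Option (Fin m × Fin n))) (hφ0 : φ none = none)
    (hφ : ∀ p : Fin m × Fin n, ∃ q : Fin m × Fin n,
      φ (some p) = some q ∧ (p.1, q.2) ∈ E ∧ (q.1, p.2) ∈ E) :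
    ∃ ψ : Option (Fin m × Fin n) → Option (Fin m × Fin n),
      (∀ x, ψ (ψ x) = x) ∧ ψ none = none ∧
      ∀ p : Fin m × Fin n, ∃ q : Fin m × Fin n,
        ψ (some p) = some q ∧ (p.1, q.2) ∈ E ∧ (q.1, p.2) ∈ E := by
  classical
  obtain ⟨a, rfl⟩ := hdvd
  -- q p : image of p under φ, with its properties
  set q : Fin m × Fin (m * a) → Fin m × Fin (m * a) := fun p => (hφ p).choose with hq
  have hqspec : ∀ p, φ (some p) = some (q p) ∧ (p.1, (q p).2) ∈ E ∧ ((q p).1, p.2) ∈ E :=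
    fun p => (hφ p).choose_spec
  have hqinj : Function.Injective q := by
    intro p₁ p₂ h
    have : φ (some p₁) = φ (some p₂) := by
      rw [(hqspec p₁).1, (hqspec p₂).1, h]
    exact Option.some_injective _ (φ.injective this)
  -- neighborhoods
  set N : Fin m → Finset (Fin (m * a)) :=
    fun i => Finset.univ.filter (fun j => (i, j) ∈ E) with hN
  -- Hall's condition for the replicated graph on Fin m × Fin a
  have hall : ∀ s : Finset (Fin m × Fin a), s.card ≤ (s.biUnion (fun p => N p.1)).card := by
    intro s
    set A₁ : Finset (Fin m) := s.image Prod.fst with hA₁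
    set B : Finset (Fin (m * a)) := A₁.biUnion N with hB
    have hbu : s.biUnion (fun p => N p.1) = B := by
      ext j
      simp only [hB, hA₁, Finset.mem_biUnion, Finset.mem_image]
      constructor
      · rintro ⟨p, hp, hj⟩; exact ⟨p.1, ⟨p, hp, rfl⟩, hj⟩
      · rintro ⟨i, ⟨p, hp, rfl⟩, hj⟩; exact ⟨p, hp, hj⟩
    rw [hbu]
    -- injection from A₁ ×ˢ univ into univ ×ˢ B via q
    have hcard : (A₁ ×ˢ (Finset.univ : Finset (Fin (m * a)))).card ≤
        ((Finset.univ : Finset (Fin m)) ×ˢ B).card := by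
      apply Finset.card_le_card_of_injOn q
      · intro p hp
        simp only [Finset.mem_coe, Finset.mem_product] at hp ⊢
        refine ⟨Finset.mem_univ _, ?_⟩
        obtain ⟨i, hi, hip⟩ := Finset.mem_image.mp hp.1
        · rw [hB]
          refine Finset.mem_biUnion.mpr ⟨p.1, hp.1, ?_⟩
          simp [hN]
          exact (hqspec p).2.1
      · exact fun p₁ _ p₂ _ h => hqinj h
    rw [Finset.card_product, Finset.card_product, Finset.card_univ, Finset.card_univ,
      Fintype.card_fin, Fintype.card_fin] at hcard
    have h1 : A₁.card * a ≤ B.card := by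
      have := hcard
      have h2 : m * (A₁.card * a) ≤ m * B.card := by
        calc m * (A₁.card * a) = A₁.card * (m * a) := by ring
        _ ≤ m * B.card := hcard
      exact Nat.le_of_mul_le_mul_left h2 hm
    calc s.card ≤ (A₁ ×ˢ (Finset.univ : Finset (Fin a))).card := by
          apply Finset.card_le_card
          intro p hp
          exact Finset.mem_product.mpr ⟨Finset.mem_image_of_mem _ hp, Finset.mem_univ _⟩
      _ = A₁.card * a := by rw [Finset.card_product, Finset.card_univ, Fintype.card_fin]
      _ ≤ B.card := h1
  -- Hall's theorem gives an injective system of representatives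
  obtain ⟨f, hfinj, hfmem⟩ :=
    (Finset.all_card_le_biUnion_card_iff_exists_injective (fun p : Fin m × Fin a => N p.1)).mp hall
  have hfbij : Function.Bijective f := by
    rw [Fintype.bijective_iff_injective_and_card]
    exact ⟨hfinj, by simp⟩
  set e : (Fin m × Fin a) ≃ Fin (m * a) := Equiv.ofBijective f hfbij with he
  have hfe : ∀ p, e p = f p := fun p => rfl
  have hfE : ∀ (i : Fin m) (t : Fin a), (i, e (i, t)) ∈ E := by
    intro i t
    have := hfmem (i, t)
    simp [hN] at this
    exact this
  -- the involution on pairs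
  set g : Fin m × Fin (m * a) → Fin m × Fin (m * a) :=
    fun p => ((e.symm p.2).1, e (p.1, (e.symm p.2).2)) with hg
  have hginv : ∀ p, g (g p) = p := by
    intro ⟨i, j⟩
    simp only [hg]
    have h1 : e.symm (e (i, (e.symm j).2)) = (i, (e.symm j).2) := e.symm_apply_apply _
    rw [h1]
    simp only
    have h2 : ((e.symm j).1, (e.symm j).2) = e.symm j := rfl
    rw [h2, e.apply_symm_apply]
  refine ⟨Option.map g, ?_, rfl, ?_⟩
  · intro x
    cases x with
    | none => rfl
    | some p => simp [hginv p]
  · intro p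
    refine ⟨g p, rfl, ?_, ?_⟩
    · exact hfE p.1 (e.symm p.2).2
    · have : ((e.symm p.2).1, e ((e.symm p.2).1, (e.symm p.2).2)) ∈ E :=
        hfE (e.symm p.2).1 (e.symm p.2).2
      simpa [e.apply_symm_apply] using this
end

section
/- Hall's harem theorem: Let G be a finite bipartite graph with parts R and C, |C| = a·|R|, such that every set of t vertices of R has at least a·t neighbours in C, and every set of t vertices of C has at least t/a neighbours in R. Then there exist a injective functions π₀,...,π_{a−1} : R → C, each mapping every r ∈ R to a neighbour of r, whose ranges are pairwise disjoint and whose union of ranges is all of C. -/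
/-- Hall's harem theorem: for a finite bipartite graph on parts R, C with |C| = a·|R|,
if every t-set of R has at least a·t neighbours and every t-set of C has at least t/a
neighbours, then there are a injective functions R → C along edges with pairwise
disjoint ranges whose union is C. -/
theorem halls_harem {R C : Type*} [Fintype R] [Fintype C] (a : ℕ) (ha : 0 < a)
    (Adj : R → C → Prop) (hcard : Fintype.card C = a * Fintype.card R)
    (hR : ∀ T : Finset R, a * T.card ≤ Set.ncard {c : C | ∃ r ∈ T, Adj r c})
    (hC : ∀ T : Finset C, T.card ≤ a * Set.ncard {r : R | ∃ c ∈ T, Adj r c}) :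
    ∃ π : Fin a → R → C,
      (∀ t, Function.Injective (π t)) ∧
      (∀ t r, Adj r (π t r)) ∧
      (∀ t t' r r', t ≠ t' → π t r ≠ π t' r') ∧
      (∀ c : C, ∃ t r, π t r = c) := by
  classical
  -- neighbourhoods as Finsets
  set N : R → Finset C := fun r => {c : C | Adj r c}.toFinset with hN
  -- blow-up: each (r, i) gets neighbourhood N r
  set t : R × Fin a → Finset C := fun p => N p.1 with ht
  have hall : ∀ s : Finset (R × Fin a), s.card ≤ (s.biUnion t).card := by
    intro s
    set T : Finset R := s.image Prod.fst with hT
    have hsub : s ⊆ T ×ˢ (Finset.univ : Finset (Fin a)) := by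
      intro p hp
      simp only [Finset.mem_product, Finset.mem_univ, and_true, hT]
      exact Finset.mem_image_of_mem _ hp
    have hcard_s : s.card ≤ a * T.card := by
      calc s.card ≤ (T ×ˢ (Finset.univ : Finset (Fin a))).card :=
            Finset.card_le_card hsub
        _ = a * T.card := by
            rw [Finset.card_product, Finset.card_univ, Fintype.card_fin, Nat.mul_comm]
    have hbi : T.biUnion N ⊆ s.biUnion t := by
      intro c hc
      rw [Finset.mem_biUnion] at hc ⊢
      obtain ⟨r, hr, hcr⟩ := hc
      rw [hT, Finset.mem_image] at hr
      obtain ⟨p, hp, rfl⟩ := hr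
      exact ⟨p, hp, hcr⟩
    have hset : {c : C | ∃ r ∈ T, Adj r c}.toFinset = T.biUnion N := by
      ext c
      simp [hN]
    have h1 : a * T.card ≤ (T.biUnion N).card := by
      have := hR T
      rwa [Set.ncard_eq_toFinset_card', hset] at this
    calc s.card ≤ a * T.card := hcard_s
      _ ≤ (T.biUnion N).card := h1
      _ ≤ (s.biUnion t).card := Finset.card_le_card hbi
  obtain ⟨f, hfinj, hfmem⟩ :=
    (Finset.all_card_le_biUnion_card_iff_exists_injective t).mp hall
  have hfadj : ∀ p : R × Fin a, Adj p.1 (f p) := by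
    intro p
    have := hfmem p
    simpa [ht, hN] using this
  have hsurj : Function.Surjective f := by
    have hcards : Fintype.card (R × Fin a) = Fintype.card C := by
      rw [Fintype.card_prod, Fintype.card_fin, hcard, Nat.mul_comm]
    exact (Fintype.bijective_iff_injective_and_card f).mpr ⟨hfinj, hcards⟩ |>.surjective
  refine ⟨fun i r => f (r, i), ?_, ?_, ?_, ?_⟩
  · intro i r r' h
    have := hfinj h
    exact (Prod.mk.injEq _ _ _ _ ▸ this).1
  · intro i r
    exact hfadj (r, i)
  · intro i i' r r' hii' h
    exact hii' ((Prod.mk.injEq _ _ _ _ ▸ hfinj h).2)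
  · intro c
    obtain ⟨⟨r, i⟩, rfl⟩ := hsurj c
    exact ⟨i, r, rfl⟩
end

section
/- Suppose S is a finite regular semigroup of minimum cardinality among those possessing a permutation matching but no involution matching. Then S is completely 0-simple, and moreover S is a 0-rectangular band (its maximal subgroups are trivial). -/
set_option linter.unusedSectionVars false
set_option maxHeartbeats 1000000

namespace ZRB

variable {S : Type} [Semigroup S]

/-- positive powers: `pw x n = x^(n+1)` -/
def pw (x : S) : ℕ → S
  | 0 => x
  | n+1 => pw x n * x

lemma pw_succ (x : S) (n : ℕ) : pw x (n+1) = pw x n * x := rfl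

lemma pw_add (x : S) (n m : ℕ) : pw x (n + m + 1) = pw x n * pw x m := by
  induction m with
  | zero => rfl
  | succ m ih =>
      have : n + (m+1) + 1 = (n + m + 1) + 1 := by omega
      rw [this, pw_succ, ih, pw_succ, mul_assoc]

lemma pw_comm (x : S) (n : ℕ) : pw x (n+1) = x * pw x n := by
  have := pw_add x 0 n
  simpa [pw] using this

lemma ex_idem_pw [Finite S] (x : S) : ∃ m : ℕ, pw x m * pw x m = pw x m := by
  obtain ⟨i, j, hij, he⟩ := Finite.exists_ne_map_eq_of_infinite (pw x)
  wlog hlt : i < j generalizing i j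
  · exact this j i hij.symm he.symm (by omega)
  set p := j - i with hp
  have hp1 : 1 ≤ p := by omega
  have step : ∀ k, i ≤ k → pw x (k + p) = pw x k := by
    intro k hk
    induction k with
    | zero =>
        have : i = 0 := by omega
        subst this
        simpa [hp, Nat.zero_add] using he.symm
    | succ k ih =>
        rcases Nat.lt_or_ge i (k+1) with h | h
        · have hik : i ≤ k := by omega
          have : k + 1 + p = (k + p) + 1 := by omega
          rw [this, pw_succ, ih hik, pw_succ]
        · have : i = k + 1 := by omega
          subst this
          have : k + 1 + p = j := by omega
          rw [this]; exact he.symm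
  have mult : ∀ t k, i ≤ k → pw x (k + t * p) = pw x k := by
    intro t
    induction t with
    | zero => intro k _; simp
    | succ t ih =>
        intro k hk
        have : k + (t+1) * p = (k + t * p) + p := by ring
        rw [this, step _ (by omega), ih k hk]
  refine ⟨p * (i + 1) - 1, ?_⟩
  set m := p * (i + 1) - 1 with hm
  have hmi : i ≤ m := by
    have : i + 1 ≤ p * (i+1) := Nat.le_mul_of_pos_left _ (by omega)
    omega
  have h2m : m + m + 1 = m + (i+1) * p := by
    have h3 : m + 1 = p * (i+1) := by
      have : i + 1 ≤ p * (i+1) := Nat.le_mul_of_pos_left _ (by omega)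
      omega
    have h4 : p * (i+1) = (i+1) * p := Nat.mul_comm _ _
    omega
  rw [← pw_add, h2m, mult (i+1) m hmi]

lemma iterL [Finite S] {a s b : S} (h : a = s * a * b) : ∃ k, a = a * pw b k := by
  have key : ∀ k, a = pw s k * a * pw b k := by
    intro k
    induction k with
    | zero => simpa [pw] using h
    | succ k ih =>
        calc a = pw s k * a * pw b k := ih
        _ = pw s k * (s * a * b) * pw b k := by rw [← h]
        _ = pw s (k+1) * a * pw b (k+1) := by
              rw [pw_succ, pw_comm]
              simp [mul_assoc]
  obtain ⟨m, hm⟩ := ex_idem_pw (S := S) s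
  have h1 : a = pw s m * a * pw b m := key m
  have h2 : pw s m * a = a := by
    calc pw s m * a = pw s m * (pw s m * a * pw b m) := by rw [← h1]
    _ = (pw s m * pw s m) * a * pw b m := by simp [mul_assoc]
    _ = pw s m * a * pw b m := by rw [hm]
    _ = a := h1.symm
  exact ⟨m, by calc a = pw s m * a * pw b m := h1
    _ = a * pw b m := by rw [h2]⟩

lemma iterR [Finite S] {a s b : S} (h : a = b * a * s) : ∃ k, a = pw b k * a := by
  have key : ∀ k, a = pw b k * a * pw s k := by
    intro k
    induction k with
    | zero => simpa [pw] using h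
    | succ k ih =>
        calc a = pw b k * a * pw s k := ih
        _ = pw b k * (b * a * s) * pw s k := by rw [← h]
        _ = pw b (k+1) * a * pw s (k+1) := by
              rw [pw_succ, pw_comm]
              simp [mul_assoc]
  obtain ⟨m, hm⟩ := ex_idem_pw (S := S) s
  have h1 : a = pw b m * a * pw s m := key m
  have h2 : a * pw s m = a := by
    calc a * pw s m = (pw b m * a * pw s m) * pw s m := by rw [← h1]
    _ = pw b m * a * (pw s m * pw s m) := by simp [mul_assoc]
    _ = pw b m * a * pw s m := by rw [hm]
    _ = a := h1.symm
  exact ⟨m, by calc a = pw b m * a * pw s m := h1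
    _ = pw b m * (a * pw s m) := by rw [mul_assoc]
    _ = pw b m * a := by rw [h2]⟩


lemma pw_pw (x : S) (a b : ℕ) : pw (pw x a) b = pw x (a*b + a + b) := by
  induction b with
  | zero => simp [pw]
  | succ b ih =>
      rw [pw_succ, ih]
      have h1 : a * (b+1) + a + (b+1) = (a*b + a + b) + a + 1 := by ring
      rw [h1, pw_add]

lemma pw_idem_mult {x : S} {n : ℕ} (h : pw x n * pw x n = pw x n) :
    ∀ k, pw x (k*(n+1) + n) = pw x n := by
  intro k
  induction k with
  | zero => simp
  | succ k ih =>
      have h1 : (k+1)*(n+1) + n = (k*(n+1) + n) + n + 1 := by ring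
      rw [h1, pw_add, ih, h]

lemma pw_period {x : S} {N : ℕ} (h : pw x N = x) : ∀ t k, pw x (t*N + k) = pw x k := by
  have base : ∀ k, pw x (N + k) = pw x k := by
    intro k
    induction k with
    | zero => exact h
    | succ k ih => rw [show N + (k+1) = (N+k)+1 from rfl, pw_succ, ih, pw_succ]
  intro t
  induction t with
  | zero => intro k; simp
  | succ t ih =>
      intro k
      have h1 : (t+1)*N + k = N + (t*N + k) := by ring
      rw [h1, base, ih]

lemma uniformN [Fintype S] : ∃ N : ℕ, 2 ≤ N ∧ ∀ x : S,
    pw x (N-1) * pw x (N-1) = pw x (N-1) := by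
  classical
  choose d hd using (fun x : S => ex_idem_pw x)
  set P := ∏ x : S, (d x + 1) with hP
  have hP1 : 1 ≤ P := Finset.one_le_prod' (fun i _ => by omega)
  refine ⟨2 * P, by omega, ?_⟩
  intro x
  have hdvd : (d x + 1) ∣ 2 * P := Dvd.dvd.mul_left (Finset.dvd_prod_of_mem _ (Finset.mem_univ x)) 2
  obtain ⟨q, hq⟩ := hdvd
  have hq0 : q ≠ 0 := by
    rintro rfl
    omega
  obtain ⟨q', rfl⟩ : ∃ q', q = q' + 1 := ⟨q - 1, by omega⟩
  have harith : (d x + 1) * (q' + 1) = q' * (d x + 1) + d x + 1 := by ring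
  have hN1 : 2 * P - 1 = q' * (d x + 1) + d x := by omega
  rw [hN1, pw_idem_mult (hd x)]
  exact hd x

/-- being an ideal (nonempty, two-sided closed) -/
def IsIdeal (I : Set S) : Prop :=
  I.Nonempty ∧ ∀ x ∈ I, ∀ s : S, s * x ∈ I ∧ x * s ∈ I

/-- principal ideal -/
def Pid (a : S) : Set S :=
  {b | b = a ∨ (∃ s, b = s * a) ∨ (∃ s, b = a * s) ∨ ∃ s t, b = s * a * t}

lemma mem_pid_self (a : S) : a ∈ Pid a := Or.inl rfl

lemma pid_isIdeal (a : S) : IsIdeal (Pid a) := by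
  refine ⟨⟨a, mem_pid_self a⟩, ?_⟩
  rintro x (rfl | ⟨s, rfl⟩ | ⟨s, rfl⟩ | ⟨s, t, rfl⟩) u
  · exact ⟨Or.inr (Or.inl ⟨u, rfl⟩), Or.inr (Or.inr (Or.inl ⟨u, rfl⟩))⟩
  · constructor
    · exact Or.inr (Or.inl ⟨u * s, by rw [mul_assoc]⟩)
    · exact Or.inr (Or.inr (Or.inr ⟨s, u, rfl⟩))
  · constructor
    · exact Or.inr (Or.inr (Or.inr ⟨u, s, by rw [mul_assoc]⟩))
    · exact Or.inr (Or.inr (Or.inl ⟨s * u, by rw [mul_assoc]⟩))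
  · constructor
    · exact Or.inr (Or.inr (Or.inr ⟨u * s, t, by simp [mul_assoc]⟩))
    · exact Or.inr (Or.inr (Or.inr ⟨s, t * u, by simp [mul_assoc]⟩))

lemma pid_min {I : Set S} (hI : IsIdeal I) {b : S} (hb : b ∈ I) : Pid b ⊆ I := by
  rintro x (rfl | ⟨s, rfl⟩ | ⟨s, rfl⟩ | ⟨s, t, rfl⟩)
  · exact hb
  · exact ((hI.2 b hb s).1)
  · exact ((hI.2 b hb s).2)
  · exact (hI.2 _ ((hI.2 b hb s).1) t).2

lemma exists_minideal [Fintype S] [Nonempty S] :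
    ∃ K : Set S, IsIdeal K ∧ ∀ x ∈ K, Pid x = K := by
  classical
  obtain ⟨m, _, hm⟩ := Finset.exists_min_image (Finset.univ : Finset S)
    (fun a => (Pid a).ncard) ⟨Classical.arbitrary S, Finset.mem_univ _⟩
  refine ⟨Pid m, pid_isIdeal m, ?_⟩
  intro x hx
  have hsub : Pid x ⊆ Pid m := pid_min (pid_isIdeal m) hx
  have hcard : (Pid m).ncard ≤ (Pid x).ncard := hm x (Finset.mem_univ x)
  exact Set.eq_of_subset_of_ncard_le hsub hcard (Set.toFinite _)

lemma minideal_Rsq [Finite S] {K : Set S} (hK : IsIdeal K) (hmin : ∀ x ∈ K, Pid x = K) :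
    ∀ x ∈ K, x = x * x ∨ ∃ w, x = (x * x) * w := by
  intro x hx
  have hx2 : x * x ∈ K := (hK.2 x hx x).1
  have hxmem : x ∈ Pid (x * x) := by rw [hmin _ hx2]; exact hx
  rcases hxmem with h | ⟨s, h⟩ | ⟨s, h⟩ | ⟨s, t, h⟩
  · exact Or.inl h
  · -- x = s * (x * x) : iterate
    have h' : x = s * x * x := by rw [mul_assoc]; exact h
    obtain ⟨k, hk⟩ := iterL h'
    cases k with
    | zero => exact Or.inl (by simpa [pw] using hk)
    | succ k =>
        refine Or.inr ⟨pw x k, ?_⟩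
        calc x = x * pw x (k+1) := hk
        _ = x * (x * pw x k) := by rw [pw_comm]
        _ = (x * x) * pw x k := by rw [← mul_assoc]
  · exact Or.inr ⟨s, h⟩
  · -- x = s * (x*x) * t
    have h' : x = s * x * (x * t) := by
      calc x = s * (x * x) * t := h
      _ = s * x * (x * t) := by simp [mul_assoc]
    obtain ⟨k, hk⟩ := iterL h'
    cases k with
    | zero =>
        refine Or.inr ⟨t, ?_⟩
        simpa [pw, mul_assoc] using hk
    | succ k =>
        refine Or.inr ⟨t * pw (x*t) k, ?_⟩
        calc x = x * pw (x*t) (k+1) := hk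
        _ = x * ((x*t) * pw (x*t) k) := by rw [pw_comm]
        _ = (x * x) * (t * pw (x*t) k) := by simp [mul_assoc]

lemma pw_fix_of_Rsq {x : S} {N : ℕ} (hN2 : 2 ≤ N)
    (hid : pw x (N-1) * pw x (N-1) = pw x (N-1))
    (hx : x = x * x ∨ ∃ w, x = (x * x) * w) : pw x N = x := by
  rcases hx with h | ⟨w, h⟩
  · -- x idempotent: all powers equal x
    have : ∀ k, pw x k = x := by
      intro k
      induction k with
      | zero => rfl
      | succ k ih => rw [pw_succ, ih, ← h]
    exact this N
  · -- x = x² w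
    have key : ∀ k, x = pw x (k+1) * pw w k := by
      intro k
      induction k with
      | zero => simpa [pw] using h
      | succ k ih =>
          have hsub : pw x (k+1) = pw x (k+2) * w := by
            calc pw x (k+1) = pw x k * x := rfl
            _ = pw x k * ((x * x) * w) := by rw [← h]
            _ = (pw x k * (x * x)) * w := by simp [mul_assoc]
            _ = pw x (k+2) * w := by rw [show pw x (k+2) = pw x k * (x*x) from by
                  have := pw_add x k 1; simpa [pw] using this]
      -- x = pw x (k+2) * (w * pw w k) = pw x (k+2) * pw w (k+1)
          calc x = pw x (k+1) * pw w k := ih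
          _ = (pw x (k+2) * w) * pw w k := by rw [hsub]
          _ = pw x (k+2) * (w * pw w k) := by rw [mul_assoc]
          _ = pw x (k+2) * pw w (k+1) := by rw [← pw_comm]
    -- x = pw x N * pw w (N-1)
    have hNsub : N - 1 + 1 = N := by omega
    have hxN : x = pw x N * pw w (N-1) := by
      have := key (N-1); rwa [hNsub] at this
    -- pw x (2N-1) = pw x (N-1)
    have h2N : pw x (N - 1 + (N-1) + 1) = pw x (N-1) := by rw [pw_add, hid]
    -- pw x N = pw x (N-1) * x ; show pw x (N-1) * x = x
    calc pw x N = pw x (N-1) * x := by rw [← pw_succ, hNsub]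
    _ = pw x (N-1) * (pw x N * pw w (N-1)) := by rw [← hxN]
    _ = (pw x (N-1) * pw x N) * pw w (N-1) := by rw [mul_assoc]
    _ = pw x (N - 1 + N + 1) * pw w (N-1) := by rw [pw_add]
    _ = pw x ((N - 1 + (N-1) + 1) + 1) * pw w (N-1) := by
          congr 2
          omega
    _ = (pw x (N-1+(N-1)+1) * x) * pw w (N-1) := by rw [pw_succ]
    _ = (pw x (N-1) * x) * pw w (N-1) := by rw [h2N]
    _ = pw x N * pw w (N-1) := by rw [← pw_succ, hNsub]
    _ = x := hxN.symm



variable {S : Type} [Semigroup S]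

def reesSetoid (I : Set S) : Setoid S :=
  ⟨fun x y => x = y ∨ (x ∈ I ∧ y ∈ I), by
    constructor
    · intro x; exact Or.inl rfl
    · rintro x y (rfl | ⟨h1, h2⟩); exacts [Or.inl rfl, Or.inr ⟨h2, h1⟩]
    · rintro x y z (rfl | ⟨h1, h2⟩) (rfl | ⟨h3, h4⟩)
      · exact Or.inl rfl
      · exact Or.inr ⟨h3, h4⟩
      · exact Or.inr ⟨h1, h2⟩
      · exact Or.inr ⟨h1, h4⟩⟩

def ReesQ (I : Set S) : Type := Quotient (reesSetoid I)

def rq (I : Set S) (x : S) : ReesQ I := Quotient.mk (reesSetoid I) x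

lemma rq_surj (I : Set S) : Function.Surjective (rq I) :=
  fun q => Quotient.inductionOn q (fun a => ⟨a, rfl⟩)

lemma rq_exact {I : Set S} {x y : S} (h : rq I x = rq I y) :
    x = y ∨ (x ∈ I ∧ y ∈ I) := Quotient.exact h

lemma rq_sound {I : Set S} {x y : S} (h : x ∈ I) (h' : y ∈ I) : rq I x = rq I y :=
  Quotient.sound (Or.inr ⟨h, h'⟩)

lemma rq_out {I : Set S} (q : ReesQ I) : rq I (Quotient.out q) = q := Quotient.out_eq q

variable {I : Set S} (hcl : ∀ x ∈ I, ∀ s : S, s * x ∈ I ∧ x * s ∈ I)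

def reesMul : ReesQ I → ReesQ I → ReesQ I :=
  Quotient.map₂ (· * ·) (by
    rintro x x' h y y' h'
    rcases h with rfl | ⟨h1, h2⟩ <;> rcases h' with rfl | ⟨h3, h4⟩
    · exact Or.inl rfl
    · exact Or.inr ⟨(hcl y h3 x).1, (hcl y' h4 x).1⟩
    · exact Or.inr ⟨(hcl x h1 y).2, (hcl x' h2 y).2⟩
    · exact Or.inr ⟨(hcl x h1 y).2, (hcl x' h2 y').2⟩)

lemma reesMul_mk (x y : S) : reesMul hcl (rq I x) (rq I y) = rq I (x * y) := rfl

def reesSG : Semigroup (ReesQ I) where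
  mul := reesMul hcl
  mul_assoc := by
    rintro ⟨a⟩ ⟨b⟩ ⟨c⟩
    exact congrArg (Quotient.mk _) (mul_assoc a b c)

noncomputable def reesFintype [Fintype S] : Fintype (ReesQ I) :=
  letI := Classical.decEq (ReesQ I)
  Fintype.ofSurjective (rq I) (rq_surj I)

def subSG (hm : ∀ x ∈ I, ∀ y ∈ I, x * y ∈ I) : Semigroup ↥I where
  mul := fun a b => ⟨a.1 * b.1, hm _ a.2 _ b.2⟩
  mul_assoc := by
    intro a b c
    apply Subtype.ext
    exact mul_assoc _ _ _

lemma perm_pre [Fintype S] (φ : Equiv.Perm S) (h : ∀ x ∈ I, φ x ∈ I) :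
    ∀ x, φ x ∈ I → x ∈ I := by
  classical
  intro x hx
  set J := Set.Finite.toFinset (Set.toFinite I) with hJ
  have hmem : ∀ y, y ∈ J ↔ y ∈ I := fun y => Set.Finite.mem_toFinset _
  have himg : J.image φ ⊆ J := by
    intro y hy
    obtain ⟨w, hw, rfl⟩ := Finset.mem_image.mp hy
    exact (hmem _).mpr (h w ((hmem _).mp hw))
  have hcard : J.card ≤ (J.image φ).card := by
    rw [Finset.card_image_of_injective _ φ.injective]
  have heq : J.image φ = J := Finset.eq_of_subset_of_card_le himg hcard
  have : φ x ∈ J.image φ := by rw [heq]; exact (hmem _).mpr hx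
  obtain ⟨w, hw, hwx⟩ := Finset.mem_image.mp this
  rwa [← φ.injective hwx, ← hmem]

/-- matching on ideal + involution matching on Rees quotient combine to S -/
lemma combine [Fintype S]
    (ψI : S → S)
    (hψ : ∀ x ∈ I, ψI x ∈ I ∧ ψI (ψI x) = x ∧ x * ψI x * x = x ∧ ψI x * x * ψI x = ψI x)
    (Ψ : Equiv.Perm (ReesQ I))
    (hinv : ∀ q, Ψ (Ψ q) = q)
    (hm : ∀ q : ReesQ I, reesMul hcl (reesMul hcl q (Ψ q)) q = q ∧
      reesMul hcl (reesMul hcl (Ψ q) q) (Ψ q) = Ψ q) :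
    ∃ φ : Equiv.Perm S, (∀ x, φ (φ x) = x) ∧
      ∀ x : S, x * φ x * x = x ∧ φ x * x * φ x = φ x := by
  classical
  set ψ : S → S := fun x => if x ∈ I then ψI x else Quotient.out (Ψ (rq I x)) with hψdef
  have hout : ∀ x, x ∉ I → (Quotient.out (Ψ (rq I x)) ∉ I ∧
      x * Quotient.out (Ψ (rq I x)) * x = x ∧
      Quotient.out (Ψ (rq I x)) * x * Quotient.out (Ψ (rq I x)) = Quotient.out (Ψ (rq I x))) := by
    intro x hx
    set b := Quotient.out (Ψ (rq I x)) with hb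
    have hrb : rq I b = Ψ (rq I x) := rq_out _
    have h1 : rq I (x * b * x) = rq I x := by
      have := (hm (rq I x)).1
      rwa [← hrb, reesMul_mk, reesMul_mk] at this
    have hxbx : x * b * x = x := by
      rcases rq_exact h1 with h | ⟨h, h'⟩
      · exact h
      · exact absurd h' hx
    have hbI : b ∉ I := by
      intro hbI
      have : x * b * x ∈ I := ((hcl _ ((hcl b hbI x).1) x).2)
      rw [hxbx] at this
      exact hx this
    have h2 : rq I (b * x * b) = rq I b := by
      have := (hm (rq I x)).2
      rwa [← hrb, reesMul_mk, reesMul_mk] at this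
    have hbxb : b * x * b = b := by
      rcases rq_exact h2 with h | ⟨h, h'⟩
      · exact h
      · exact absurd h' hbI
    exact ⟨hbI, hxbx, hbxb⟩
  have hinvol : Function.Involutive ψ := by
    intro x
    by_cases hx : x ∈ I
    · have h1 := hψ x hx
      simp only [hψdef, if_pos hx, if_pos h1.1]
      exact h1.2.1
    · have h1 := hout x hx
      simp only [hψdef, if_neg hx, if_neg h1.1]
      have hrb : rq I (Quotient.out (Ψ (rq I x))) = Ψ (rq I x) := rq_out _
      have : rq I (Quotient.out (Ψ (rq I (Quotient.out (Ψ (rq I x)))))) = rq I x := by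
        rw [hrb, hinv, rq_out]
      rcases rq_exact this with h | ⟨h, h'⟩
      · exact h
      · exact absurd h' hx
  refine ⟨hinvol.toPerm, ?_, ?_⟩
  · intro x
    exact hinvol x
  · intro x
    by_cases hx : x ∈ I
    · have h1 := hψ x hx
      simp only [Function.Involutive.coe_toPerm, hψdef, if_pos hx]
      exact ⟨h1.2.2.1, h1.2.2.2⟩
    · have h1 := hout x hx
      simp only [Function.Involutive.coe_toPerm, hψdef, if_neg hx]
      exact ⟨h1.2.1, h1.2.2⟩

/-- a permutation matching on S induces one on the Rees quotient -/
lemma inducedPerm [Fintype S] (φ : Equiv.Perm S)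
    (hφ : ∀ x : S, x * φ x * x = x ∧ φ x * x * φ x = φ x) :
    ∃ Φ : Equiv.Perm (ReesQ I), ∀ q, reesMul hcl (reesMul hcl q (Φ q)) q = q ∧
      reesMul hcl (reesMul hcl (Φ q) q) (Φ q) = Φ q := by
  have hmaps : ∀ x ∈ I, φ x ∈ I := by
    intro x hx
    have h2 := (hφ x).2
    have : φ x * x * φ x ∈ I := (hcl _ ((hcl x hx (φ x)).1) (φ x)).2
    rwa [h2] at this
  have hmaps' : ∀ x ∈ I, φ.symm x ∈ I := by
    intro x hx
    apply perm_pre φ hmaps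
    rwa [Equiv.apply_symm_apply]
  have wd : ∀ x y, (reesSetoid I).r x y → (reesSetoid I).r (φ x) (φ y) := by
    rintro x y (rfl | ⟨h1, h2⟩)
    · exact Or.inl rfl
    · exact Or.inr ⟨hmaps x h1, hmaps y h2⟩
  have wd' : ∀ x y, (reesSetoid I).r x y → (reesSetoid I).r (φ.symm x) (φ.symm y) := by
    rintro x y (rfl | ⟨h1, h2⟩)
    · exact Or.inl rfl
    · exact Or.inr ⟨hmaps' x h1, hmaps' y h2⟩
  refine ⟨⟨Quotient.map φ wd, Quotient.map φ.symm wd', ?_, ?_⟩, ?_⟩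
  · rintro ⟨a⟩
    exact congrArg (Quotient.mk _) (φ.symm_apply_apply a)
  · rintro ⟨a⟩
    exact congrArg (Quotient.mk _) (φ.apply_symm_apply a)
  · rintro ⟨a⟩
    refine ⟨?_, ?_⟩
    · exact congrArg (Quotient.mk _) ((hφ a).1)
    · exact congrArg (Quotient.mk _) ((hφ a).2)


variable {S : Type} [Semigroup S]

-- Green's preorders
def leR (a b : S) : Prop := a = b ∨ ∃ u, a = b * u
def leL (a b : S) : Prop := a = b ∨ ∃ u, a = u * b
def Req (a b : S) : Prop := leR a b ∧ leR b a
def Leq (a b : S) : Prop := leL a b ∧ leL b a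
def Heq (a b : S) : Prop := Req a b ∧ Leq a b

lemma leR_refl (a : S) : leR a a := Or.inl rfl
lemma leL_refl (a : S) : leL a a := Or.inl rfl
lemma leR_trans {a b c : S} (h1 : leR a b) (h2 : leR b c) : leR a c := by
  rcases h1 with rfl | ⟨u, rfl⟩
  · exact h2
  · rcases h2 with rfl | ⟨v, rfl⟩
    · exact Or.inr ⟨u, rfl⟩
    · exact Or.inr ⟨v * u, by rw [mul_assoc]⟩
lemma leL_trans {a b c : S} (h1 : leL a b) (h2 : leL b c) : leL a c := by
  rcases h1 with rfl | ⟨u, rfl⟩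
  · exact h2
  · rcases h2 with rfl | ⟨v, rfl⟩
    · exact Or.inr ⟨u, rfl⟩
    · exact Or.inr ⟨u * v, by rw [mul_assoc]⟩
lemma Req_refl (a : S) : Req a a := ⟨leR_refl a, leR_refl a⟩
lemma Leq_refl (a : S) : Leq a a := ⟨leL_refl a, leL_refl a⟩
lemma Req_symm {a b : S} (h : Req a b) : Req b a := ⟨h.2, h.1⟩
lemma Leq_symm {a b : S} (h : Leq a b) : Leq b a := ⟨h.2, h.1⟩
lemma Req_trans {a b c : S} (h1 : Req a b) (h2 : Req b c) : Req a c :=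
  ⟨leR_trans h1.1 h2.1, leR_trans h2.2 h1.2⟩
lemma Leq_trans {a b c : S} (h1 : Leq a b) (h2 : Leq b c) : Leq a c :=
  ⟨leL_trans h1.1 h2.1, leL_trans h2.2 h1.2⟩
lemma Heq_refl (a : S) : Heq a a := ⟨Req_refl a, Leq_refl a⟩
lemma Heq_symm {a b : S} (h : Heq a b) : Heq b a := ⟨Req_symm h.1, Leq_symm h.2⟩
lemma Heq_trans {a b c : S} (h1 : Heq a b) (h2 : Heq b c) : Heq a c :=
  ⟨Req_trans h1.1 h2.1, Leq_trans h1.2 h2.2⟩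

lemma leR_mul_left {a b : S} (c : S) (h : leR a b) : leR (c * a) (c * b) := by
  rcases h with rfl | ⟨u, rfl⟩
  · exact leR_refl _
  · exact Or.inr ⟨u, by rw [mul_assoc]⟩
lemma leL_mul_right {a b : S} (c : S) (h : leL a b) : leL (a * c) (b * c) := by
  rcases h with rfl | ⟨u, rfl⟩
  · exact leL_refl _
  · exact Or.inr ⟨u, by rw [mul_assoc]⟩


/-- Miller-Clifford: if ab is R-above a and L-above b, idempotent in L_a ∩ R_b -/
lemma mc {a b c' : S} (h1 : (a*b) * c' * (a*b) = a*b) (h2 : c' * (a*b) * c' = c')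
    (hR : leR a (a*b)) (hL : leL b (a*b)) :
    (b*c'*a) * (b*c'*a) = b*c'*a ∧ Leq (b*c'*a) a ∧ Req (b*c'*a) b := by
  have key : a = (a*b)*c'*a := by
    rcases hR with h | ⟨u, h⟩
    · calc a = a*b := h
      _ = (a*b)*c'*(a*b) := h1.symm
      _ = ((a*b)*c')*(a*b) := rfl
      _ = ((a*b)*c')*a := by rw [← h]
    · calc a = (a*b)*u := h
      _ = ((a*b)*c'*(a*b))*u := by rw [h1]
      _ = (a*b)*c'*((a*b)*u) := by simp [mul_assoc]
      _ = (a*b)*c'*a := by rw [← h]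
  have key2 : b = b*(c'*(a*b)) := by
    rcases hL with h | ⟨w, h⟩
    · calc b = a*b := h
      _ = (a*b)*c'*(a*b) := h1.symm
      _ = (a*b)*(c'*(a*b)) := by simp [mul_assoc]
      _ = b*(c'*(a*b)) := by rw [← h]
    · calc b = w*(a*b) := h
      _ = w*((a*b)*c'*(a*b)) := by rw [h1]
      _ = (w*(a*b))*(c'*(a*b)) := by simp [mul_assoc]
      _ = b*(c'*(a*b)) := by rw [← h]
  have hae : a * (b*c'*a) = a := by
    calc a * (b*c'*a) = (a*b)*c'*a := by simp [mul_assoc]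
    _ = a := key.symm
  have heb : (b*c'*a)*b = b := by
    calc (b*c'*a)*b = b*(c'*(a*b)) := by simp [mul_assoc]
    _ = b := key2.symm
  refine ⟨?_, ⟨Or.inr ⟨b*c', by simp [mul_assoc]⟩, Or.inr ⟨a, hae.symm⟩⟩,
    ⟨Or.inr ⟨c'*a, by simp [mul_assoc]⟩, Or.inr ⟨b, heb.symm⟩⟩⟩
  calc (b*c'*a)*(b*c'*a) = b*(c' * (a*b) * c')*a := by simp [mul_assoc]
  _ = b*c'*a := by rw [h2]

/-- construct an inverse of x in prescribed H-class given idempotents -/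
lemma invInCls {x e f x' : S} (hx1 : x * x' * x = x)
    (he : e*e = e) (hf : f*f = f) (heL : Leq e x) (hfR : Req f x) :
    x * (e*x'*f) * x = x ∧ (e*x'*f) * x * (e*x'*f) = e*x'*f ∧
      Req (e*x'*f) e ∧ Leq (e*x'*f) f := by
  have hxe : x * e = x := by
    rcases heL.2 with h | ⟨w, h⟩
    · rw [h, he, ← h]
    · rw [h, mul_assoc, he]
  have hfx : f * x = x := by
    rcases hfR.2 with h | ⟨w, h⟩
    · rw [h, hf, ← h]
    · rw [h, ← mul_assoc, hf]
  have hex : e * x' * x = e := by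
    rcases heL.1 with h | ⟨v, h⟩
    · rw [h]; exact hx1
    · rw [h]
      calc v * x * x' * x = v * (x * x' * x) := by simp [mul_assoc]
      _ = v * x := by rw [hx1]
  have hxf : x * x' * f = f := by
    rcases hfR.1 with h | ⟨u, h⟩
    · rw [h]; exact hx1
    · rw [h]
      calc x * x' * (x * u) = (x * x' * x) * u := by simp [mul_assoc]
      _ = x * u := by rw [hx1]
  have hab : x * (e*x'*f) = f := by
    calc x * (e*x'*f) = (x * e) * (x' * f) := by simp [mul_assoc]
    _ = x * (x' * f) := by rw [hxe]
    _ = x * x' * f := by rw [mul_assoc]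
    _ = f := hxf
  have hba : (e*x'*f) * x = e := by
    calc (e*x'*f) * x = e * x' * (f * x) := by simp [mul_assoc]
    _ = e * x' * x := by rw [hfx]
    _ = e := hex
  refine ⟨?_, ?_, ⟨Or.inr ⟨x'*f, by simp [mul_assoc]⟩, Or.inr ⟨x, hba.symm⟩⟩,
    ⟨Or.inr ⟨e*x', by simp [mul_assoc]⟩, Or.inr ⟨x, hab.symm⟩⟩⟩
  · calc x * (e*x'*f) * x = f * x := by rw [hab]
    _ = x := hfx
  · calc (e*x'*f) * x * (e*x'*f) = e * (e*x'*f) := by rw [hba]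
    _ = (e * e) * (x' * f) := by simp [mul_assoc]
    _ = e * (x' * f) := by rw [he]
    _ = e*x'*f := by rw [mul_assoc]

lemma idem_heq_eq {e f : S} (he : e*e = e) (hf : f*f = f) (h : Heq e f) : e = f := by
  have hef : e * f = f := by
    rcases h.1.2 with h1 | ⟨u, h1⟩
    · rw [h1, he]
    · rw [h1, ← mul_assoc, he]
  have hef' : e * f = e := by
    rcases h.2.1 with h1 | ⟨w, h1⟩
    · rw [h1, hf]
    · rw [h1, mul_assoc, hf]
  rw [← hef', hef]

lemma inv_unique {x b₁ b₂ : S} (h₁ : x*b₁*x = x ∧ b₁*x*b₁ = b₁)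
    (h₂ : x*b₂*x = x ∧ b₂*x*b₂ = b₂) (h : Heq b₁ b₂) : b₁ = b₂ := by
  have idemE : ∀ {b : S}, x*b*x = x → (x*b)*(x*b) = x*b := by
    intro b hb
    calc (x*b)*(x*b) = (x*b*x)*b := by simp [mul_assoc]
    _ = x*b := by rw [hb]
  have idemF : ∀ {b : S}, x*b*x = x → (b*x)*(b*x) = b*x := by
    intro b hb
    calc (b*x)*(b*x) = b*(x*b*x) := by simp [mul_assoc]
    _ = b*x := by rw [hb]
  have ReqEx : ∀ {b : S}, x*b*x = x → Req (x*b) x := by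
    intro b hb
    exact ⟨Or.inr ⟨b, rfl⟩, Or.inr ⟨x, hb.symm⟩⟩
  have LeqEb : ∀ {b : S}, b*x*b = b → Leq (x*b) b := by
    intro b hb
    exact ⟨Or.inr ⟨x, rfl⟩, Or.inr ⟨b, by rw [← mul_assoc, hb]⟩⟩
  have LeqFx : ∀ {b : S}, x*b*x = x → Leq (b*x) x := by
    intro b hb
    exact ⟨Or.inr ⟨b, rfl⟩, Or.inr ⟨x, by rw [← mul_assoc, hb]⟩⟩
  have ReqFb : ∀ {b : S}, b*x*b = b → Req (b*x) b := by
    intro b hb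
    exact ⟨Or.inr ⟨x, rfl⟩, Or.inr ⟨b, by rw [hb]⟩⟩
  have hE : x*b₁ = x*b₂ := by
    apply idem_heq_eq (idemE h₁.1) (idemE h₂.1)
    exact ⟨Req_trans (ReqEx h₁.1) (Req_symm (ReqEx h₂.1)),
      Leq_trans (LeqEb h₁.2) (Leq_trans h.2 (Leq_symm (LeqEb h₂.2)))⟩
  have hF : b₁*x = b₂*x := by
    apply idem_heq_eq (idemF h₁.1) (idemF h₂.1)
    exact ⟨Req_trans (ReqFb h₁.2) (Req_trans h.1 (Req_symm (ReqFb h₂.2))),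
      Leq_trans (LeqFx h₁.1) (Leq_symm (LeqFx h₂.1))⟩
  calc b₁ = b₁*x*b₁ := h₁.2.symm
  _ = (b₂*x)*b₁ := by rw [hF]
  _ = b₂*(x*b₁) := by rw [mul_assoc]
  _ = b₂*(x*b₂) := by rw [hE]
  _ = b₂*x*b₂ := by rw [mul_assoc]
  _ = b₂ := h₂.2

section withZero
variable [Finite S] {z : S} (hz : ∀ x : S, z * x = z ∧ x * z = z)
  (hdich : ∀ a : S, a ≠ z → ∀ b : S, b ∈ Pid a)

include hz hdich

/-- stability: a nonzero product is R-below-equivalent to its left factor -/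
lemma stR {a b : S} (h : a * b ≠ z) : Req (a * b) a := by
  refine ⟨Or.inr ⟨b, rfl⟩, ?_⟩
  rcases hdich (a * b) h a with h1 | ⟨s, h1⟩ | ⟨t, h1⟩ | ⟨s, t, h1⟩
  · exact Or.inl h1
  · have h' : a = s * a * b := by rw [mul_assoc]; exact h1
    obtain ⟨k, hk⟩ := iterL h'
    cases k with
    | zero => exact Or.inl hk
    | succ k =>
        refine Or.inr ⟨pw b k, ?_⟩
        calc a = a * pw b (k+1) := hk
        _ = a * (b * pw b k) := by rw [pw_comm]
        _ = (a * b) * pw b k := by rw [mul_assoc]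
  · exact Or.inr ⟨t, h1⟩
  · have h' : a = s * a * (b * t) := by
      calc a = s * (a * b) * t := h1
      _ = s * a * (b * t) := by simp [mul_assoc]
    obtain ⟨k, hk⟩ := iterL h'
    cases k with
    | zero =>
        refine Or.inr ⟨t, ?_⟩
        calc a = a * (b * t) := hk
        _ = a * b * t := by rw [mul_assoc]
    | succ k =>
        refine Or.inr ⟨t * pw (b*t) k, ?_⟩
        calc a = a * pw (b*t) (k+1) := hk
        _ = a * ((b*t) * pw (b*t) k) := by rw [pw_comm]
        _ = (a * b) * (t * pw (b*t) k) := by simp [mul_assoc]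

lemma stL {a b : S} (h : a * b ≠ z) : Leq (a * b) b := by
  refine ⟨Or.inr ⟨a, rfl⟩, ?_⟩
  rcases hdich (a * b) h b with h1 | ⟨s, h1⟩ | ⟨t, h1⟩ | ⟨s, t, h1⟩
  · exact Or.inl h1
  · exact Or.inr ⟨s, h1⟩
  · have h' : b = a * b * t := h1
    obtain ⟨k, hk⟩ := iterR h'
    cases k with
    | zero => exact Or.inl hk
    | succ k =>
        refine Or.inr ⟨pw a k, ?_⟩
        calc b = pw a (k+1) * b := hk
        _ = pw a k * a * b := rfl
        _ = pw a k * (a * b) := by rw [mul_assoc]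
  · have h' : b = (s * a) * b * t := by
      calc b = s * (a * b) * t := h1
      _ = (s * a) * b * t := by simp [mul_assoc]
    obtain ⟨k, hk⟩ := iterR h'
    cases k with
    | zero =>
        refine Or.inr ⟨s, ?_⟩
        calc b = (s * a) * b := hk
        _ = s * (a * b) := by rw [mul_assoc]
    | succ k =>
        refine Or.inr ⟨pw (s*a) k * s, ?_⟩
        calc b = pw (s*a) (k+1) * b := hk
        _ = pw (s*a) k * (s*a) * b := rfl
        _ = (pw (s*a) k * s) * (a * b) := by simp [mul_assoc]

lemma heq_zero {x : S} (h : Heq x z) : x = z := by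
  rcases h.2.1 with h1 | ⟨u, h1⟩
  · exact h1
  · rw [h1, (hz u).2]

lemma heq_mul_left {a b : S} (c : S) (h : Heq a b) : Heq (c * a) (c * b) := by
  by_cases hca : c * a = z
  · have hcb : c * b = z := by
      rcases h.1.2 with rfl | ⟨u, rfl⟩
      · exact hca
      · rw [← mul_assoc, hca, (hz u).1]
    rw [hca, hcb]
    exact Heq_refl z
  · have hcb : c * b ≠ z := by
      intro hcb
      rcases h.1.1 with rfl | ⟨u, rfl⟩
      · exact hca hcb
      · rw [← mul_assoc, hcb] at hca
        exact hca (hz u).1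
    constructor
    · exact ⟨leR_mul_left c h.1.1, leR_mul_left c h.1.2⟩
    · exact Leq_trans (stL hz hdich hca)
        (Leq_trans h.2 (Leq_symm (stL hz hdich hcb)))

lemma heq_mul_right {a b : S} (c : S) (h : Heq a b) : Heq (a * c) (b * c) := by
  by_cases hca : a * c = z
  · have hcb : b * c = z := by
      rcases h.2.2 with rfl | ⟨u, rfl⟩
      · exact hca
      · rw [mul_assoc, hca, (hz u).2]
    rw [hca, hcb]
    exact Heq_refl z
  · have hcb : b * c ≠ z := by
      intro hcb
      rcases h.2.1 with rfl | ⟨u, rfl⟩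
      · exact hca hcb
      · rw [mul_assoc, hcb] at hca
        exact hca (hz u).2
    constructor
    · exact Req_trans (stR hz hdich hca)
        (Req_trans h.1 (Req_symm (stR hz hdich hcb)))
    · exact ⟨leL_mul_right c h.2.1, leL_mul_right c h.2.2⟩

end withZero

section cards
variable [Fintype S]

noncomputable def Hset (a : S) : Finset S :=
  @Finset.filter _ (fun x => Heq x a) (fun _ => Classical.dec _) Finset.univ

lemma mem_Hset {x a : S} : x ∈ Hset a ↔ Heq x a := by
  simp [Hset]

lemma card_Hset_le_of_R {a b : S} (h : Req a b) : (Hset a).card ≤ (Hset b).card := by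
  rcases h.1 with h1 | ⟨u, hu⟩
  · rw [h1]
  rcases h.2 with h2 | ⟨v, hv⟩
  · rw [h2]
  have key1 : a = a*(v*u) := by
    calc a = b*u := hu
    _ = (a*v)*u := by rw [← hv]
    _ = a*(v*u) := by rw [mul_assoc]
  have fix : ∀ x, Heq x a → (x*v)*u = x := by
    intro x hx
    rcases hx.2.1 with h3 | ⟨w, h3⟩
    · rw [h3, mul_assoc]; exact key1.symm
    · rw [h3, mul_assoc, mul_assoc, ← key1]
  apply Finset.card_le_card_of_injOn (fun x => x*v)
  · intro x hx
    rw [Finset.mem_coe, mem_Hset] at hx ⊢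
    constructor
    · have hRx : Req (x*v) x := ⟨Or.inr ⟨v, rfl⟩, Or.inr ⟨u, (fix x hx).symm⟩⟩
      exact Req_trans hRx (Req_trans hx.1 h)
    · have hxv : Leq (x*v) (a*v) := ⟨leL_mul_right v hx.2.1, leL_mul_right v hx.2.2⟩
      rw [hv]
      exact hxv
  · intro x hx y hy hxy
    rw [Finset.mem_coe, mem_Hset] at hx hy
    simp only at hxy
    calc x = (x*v)*u := (fix x hx).symm
    _ = (y*v)*u := by rw [hxy]
    _ = y := fix y hy

lemma card_Hset_le_of_L {a b : S} (h : Leq a b) : (Hset a).card ≤ (Hset b).card := by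
  rcases h.1 with h1 | ⟨u, hu⟩
  · rw [h1]
  rcases h.2 with h2 | ⟨v, hv⟩
  · rw [h2]
  have key1 : a = (u*v)*a := by
    calc a = u*b := hu
    _ = u*(v*a) := by rw [← hv]
    _ = (u*v)*a := by rw [← mul_assoc]
  have fix : ∀ x, Heq x a → u*(v*x) = x := by
    intro x hx
    rcases hx.1.1 with h3 | ⟨w, h3⟩
    · rw [h3, ← mul_assoc]; exact key1.symm
    · rw [h3, ← mul_assoc, ← mul_assoc, ← key1]
  apply Finset.card_le_card_of_injOn (fun x => v*x)
  · intro x hx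
    rw [Finset.mem_coe, mem_Hset] at hx ⊢
    constructor
    · have hxv : Req (v*x) (v*a) := ⟨leR_mul_left v hx.1.1, leR_mul_left v hx.1.2⟩
      rw [hv]
      exact hxv
    · have hLx : Leq (v*x) x := ⟨Or.inr ⟨v, rfl⟩, Or.inr ⟨u, (fix x hx).symm⟩⟩
      exact Leq_trans hLx (Leq_trans hx.2 h)
  · intro x hx y hy hxy
    rw [Finset.mem_coe, mem_Hset] at hx hy
    simp only at hxy
    calc x = u*(v*x) := (fix x hx).symm
    _ = u*(v*y) := by rw [hxy]
    _ = y := fix y hy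

lemma card_Hset_R {a b : S} (h : Req a b) : (Hset a).card = (Hset b).card :=
  le_antisymm (card_Hset_le_of_R h) (card_Hset_le_of_R (Req_symm h))

lemma card_Hset_L {a b : S} (h : Leq a b) : (Hset a).card = (Hset b).card :=
  le_antisymm (card_Hset_le_of_L h) (card_Hset_le_of_L (Leq_symm h))

end cards

section withZeroFin
variable [Fintype S] {z : S} (hz : ∀ x : S, z * x = z ∧ x * z = z)
  (hdich : ∀ a : S, a ≠ z → ∀ b : S, b ∈ Pid a)
include hz hdich

lemma dClass {a b : S} (ha : a ≠ z) (hb : b ≠ z) : ∃ c, Req a c ∧ Leq c b := by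
  rcases hdich b hb a with h1 | ⟨s, h1⟩ | ⟨t, h1⟩ | ⟨s, t, h1⟩
  · exact ⟨b, by rw [h1]; exact Req_refl b, Leq_refl b⟩
  · refine ⟨a, Req_refl a, ?_⟩
    have : s * b ≠ z := by rw [← h1]; exact ha
    have := stL hz hdich this
    rwa [← h1] at this
  · refine ⟨b, ?_, Leq_refl b⟩
    have : b * t ≠ z := by rw [← h1]; exact ha
    have := stR hz hdich this
    rw [← h1] at this
    exact this
  · have hsb : s * b ≠ z := by
      intro hsb
      apply ha
      rw [h1, hsb, (hz t).1]
    refine ⟨s*b, ?_, stL hz hdich hsb⟩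
    have : (s*b) * t ≠ z := by rw [← h1]; exact ha
    have := stR hz hdich this
    rw [← h1] at this
    exact this

lemma card_Hset_eq {a b : S} (ha : a ≠ z) (hb : b ≠ z) :
    (Hset a).card = (Hset b).card := by
  obtain ⟨c, hc1, hc2⟩ := dClass hz hdich ha hb
  rw [card_Hset_R hc1, card_Hset_L hc2]

end withZeroFin

def hSetoid (S : Type) [Semigroup S] : Setoid S :=
  ⟨Heq, ⟨Heq_refl, fun h => Heq_symm h, fun h h' => Heq_trans h h'⟩⟩

def HQ (S : Type) [Semigroup S] : Type := Quotient (hSetoid S)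

def hq (x : S) : HQ S := Quotient.mk (hSetoid S) x

lemma hq_surj : Function.Surjective (hq (S := S)) :=
  fun q => Quotient.inductionOn q (fun a => ⟨a, rfl⟩)

lemma hq_exact {x y : S} (h : hq x = hq y) : Heq x y := Quotient.exact h

lemma hq_sound {x y : S} (h : Heq x y) : hq x = hq y := Quotient.sound h

lemma hq_out (q : HQ S) : hq (Quotient.out q) = q := Quotient.out_eq q

section hquot
variable [Fintype S] {z : S} (hz : ∀ x : S, z * x = z ∧ x * z = z)
  (hdich : ∀ a : S, a ≠ z → ∀ b : S, b ∈ Pid a)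

def hMul : HQ S → HQ S → HQ S :=
  Quotient.map₂ (· * ·) (by
    intro a b hab c d hcd
    exact Heq_trans (heq_mul_left hz hdich a hcd) (heq_mul_right hz hdich d hab))

lemma hMul_mk (x y : S) : hMul hz hdich (hq x) (hq y) = hq (x * y) := rfl

def hSG : Semigroup (HQ S) where
  mul := hMul hz hdich
  mul_assoc := by
    rintro ⟨a⟩ ⟨b⟩ ⟨c⟩
    exact congrArg (Quotient.mk _) (mul_assoc a b c)

noncomputable def hFintype : Fintype (HQ S) :=
  letI := Classical.decEq (HQ S)
  Fintype.ofSurjective (hq (S := S)) hq_surj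

end hquot


lemma hq_perm [Fintype S] {z : S} (hz : ∀ x : S, z * x = z ∧ x * z = z)
    (hdich : ∀ a : S, a ≠ z → ∀ b : S, b ∈ Pid a) (φ : Equiv.Perm S)
    (hφ : ∀ x : S, x * φ x * x = x ∧ φ x * x * φ x = φ x) :
    ∃ Φ : Equiv.Perm (HQ S), ∀ q, hMul hz hdich (hMul hz hdich q (Φ q)) q = q ∧
      hMul hz hdich (hMul hz hdich (Φ q) q) (Φ q) = Φ q := by
  classical
  letI : Fintype (HQ S) := hFintype
  have mem_clsF : ∀ (x : S) (A : HQ S), x ∈ Hset (Quotient.out A) ↔ hq x = A := by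
    intro x A
    rw [mem_Hset]
    constructor
    · intro h
      rw [← hq_out A]
      exact hq_sound h
    · intro h
      exact hq_exact (by rw [h, hq_out])
  have out_ne : ∀ A : HQ S, A ≠ hq z → Quotient.out A ≠ z := by
    intro A hA h
    apply hA
    rw [← hq_out A, h]
  let t : {A : HQ S // A ≠ hq z} → Finset {A : HQ S // A ≠ hq z} := fun A =>
    Finset.univ.filter
      (fun B => ∃ a b : S, hq a = A.1 ∧ hq b = B.1 ∧ a*b*a = a ∧ b*a*b = b)
  have hall : ∀ s : Finset {A : HQ S // A ≠ hq z}, s.card ≤ (s.biUnion t).card := by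
    intro s
    rcases s.eq_empty_or_nonempty with rfl | ⟨A₀, hA₀⟩
    · simp
    set n := (Hset (Quotient.out A₀.1)).card with hn
    have hcards : ∀ A : {A : HQ S // A ≠ hq z}, (Hset (Quotient.out A.1)).card = n :=
      fun A => card_Hset_eq hz hdich (out_ne _ A.2) (out_ne _ A₀.2)
    have hn1 : 1 ≤ n := by
      rw [hn, Nat.one_le_iff_ne_zero, ← Nat.pos_iff_ne_zero, Finset.card_pos]
      exact ⟨Quotient.out A₀.1, (mem_clsF _ _).mpr (hq_out _)⟩
    have hdisj : ∀ (W : Finset {A : HQ S // A ≠ hq z}),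
        (W.biUnion fun A => Hset (Quotient.out A.1)).card = W.card * n := by
      intro W
      rw [Finset.card_biUnion]
      · rw [Finset.sum_congr rfl (fun A _ => hcards A), Finset.sum_const, smul_eq_mul]
      · intro A hA B hB hAB
        refine Finset.disjoint_left.mpr ?_
        intro x hxA hxB
        apply hAB
        apply Subtype.ext
        rw [← (mem_clsF x A.1).mp hxA, ← (mem_clsF x B.1).mp hxB]
    have hUV : (s.biUnion fun A => Hset (Quotient.out A.1)).card ≤
        ((s.biUnion t).biUnion fun B => Hset (Quotient.out B.1)).card := by
      apply Finset.card_le_card_of_injOn φ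
      · intro x hx
        obtain ⟨A, hAs, hxA⟩ := Finset.mem_biUnion.mp hx
        have hqx : hq x = A.1 := (mem_clsF _ _).mp hxA
        have hxz : x ≠ z := fun h => A.2 (by rw [← hqx, h])
        have hφz : φ x ≠ z := by
          intro h
          apply hxz
          have h2 := (hφ x).1
          rw [h, (hz x).2, (hz x).1] at h2
          exact h2.symm
        refine Finset.mem_biUnion.mpr
          ⟨⟨hq (φ x), fun h => hφz (heq_zero hz hdich (hq_exact h))⟩,
           Finset.mem_biUnion.mpr ⟨A, hAs, ?_⟩, (mem_clsF _ _).mpr rfl⟩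
        simp only [t, Finset.mem_filter]
        exact ⟨Finset.mem_univ _, x, φ x, hqx, rfl, (hφ x).1, (hφ x).2⟩
      · exact φ.injective.injOn
    rw [hdisj s, hdisj (s.biUnion t)] at hUV
    exact Nat.le_of_mul_le_mul_right hUV hn1
  obtain ⟨f, hfinj, hft⟩ := (Finset.all_card_le_biUnion_card_iff_exists_injective t).mp hall
  have hfbij := Finite.injective_iff_bijective.mp hfinj
  let g := Equiv.ofBijective f hfbij
  let Φfun : HQ S → HQ S := fun A => if h : A = hq z then A else (g ⟨A, h⟩).1
  let Φinv : HQ S → HQ S := fun A => if h : A = hq z then A else (g.symm ⟨A, h⟩).1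
  have hΦli : ∀ A, Φinv (Φfun A) = A := by
    intro A
    by_cases h : A = hq z
    · simp [Φfun, Φinv, h]
    · have h2 : (g ⟨A, h⟩).1 ≠ hq z := (g ⟨A, h⟩).2
      simp only [Φfun, Φinv, dif_neg h, dif_neg h2]
      have h3 : (⟨(g ⟨A, h⟩).1, h2⟩ : {A : HQ S // A ≠ hq z}) = g ⟨A, h⟩ := Subtype.ext rfl
      rw [h3, Equiv.symm_apply_apply]
  have hΦri : ∀ A, Φfun (Φinv A) = A := by
    intro A
    by_cases h : A = hq z
    · simp [Φfun, Φinv, h]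
    · have h2 : (g.symm ⟨A, h⟩).1 ≠ hq z := (g.symm ⟨A, h⟩).2
      simp only [Φfun, Φinv, dif_neg h, dif_neg h2]
      have h3 : (⟨(g.symm ⟨A, h⟩).1, h2⟩ : {A : HQ S // A ≠ hq z}) = g.symm ⟨A, h⟩ :=
        Subtype.ext rfl
      rw [h3, Equiv.apply_symm_apply]
  refine ⟨⟨Φfun, Φinv, hΦli, hΦri⟩, ?_⟩
  intro q
  by_cases h : q = hq z
  · have hfix : Φfun q = q := by simp [Φfun, h]
    show hMul hz hdich (hMul hz hdich q (Φfun q)) q = q ∧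
      hMul hz hdich (hMul hz hdich (Φfun q) q) (Φfun q) = Φfun q
    rw [hfix, h, hMul_mk, hMul_mk, (hz z).1, (hz z).1]
    exact ⟨rfl, rfl⟩
  · show hMul hz hdich (hMul hz hdich q (Φfun q)) q = q ∧
      hMul hz hdich (hMul hz hdich (Φfun q) q) (Φfun q) = Φfun q
    have hΦq : Φfun q = (g ⟨q, h⟩).1 := by simp [Φfun, dif_neg h]
    have hmem := hft ⟨q, h⟩
    simp only [t, Finset.mem_filter] at hmem
    obtain ⟨-, a, b, ha, hb, hab1, hab2⟩ := hmem
    have hgf : (g ⟨q, h⟩).1 = (f ⟨q, h⟩).1 := rfl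
    rw [hΦq, hgf]
    generalize hBdef : (f ⟨q, h⟩).1 = B at hb ⊢
    rw [← ha, ← hb, hMul_mk, hMul_mk, hMul_mk, hMul_mk, hab1, hab2]
    exact ⟨rfl, rfl⟩


lemma hq_lift [Fintype S] {z : S} (hz : ∀ x : S, z * x = z ∧ x * z = z)
    (hdich : ∀ a : S, a ≠ z → ∀ b : S, b ∈ Pid a)
    (hreg : ∀ a : S, ∃ b : S, a * b * a = a ∧ b * a * b = b)
    (Ψ : Equiv.Perm (HQ S)) (hΨinv : ∀ q, Ψ (Ψ q) = q)
    (hΨm : ∀ q, hMul hz hdich (hMul hz hdich q (Ψ q)) q = q ∧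
      hMul hz hdich (hMul hz hdich (Ψ q) q) (Ψ q) = Ψ q) :
    ∃ φ : Equiv.Perm S, (∀ x, φ (φ x) = x) ∧
      ∀ x : S, x * φ x * x = x ∧ φ x * x * φ x = φ x := by
  classical
  have key : ∀ x : S, x ≠ z → ∃ b, (x*b*x = x ∧ b*x*b = b) ∧ hq b = Ψ (hq x) := by
    intro x hx
    set b₀ := Quotient.out (Ψ (hq x)) with hb₀
    have hqb₀ : hq b₀ = Ψ (hq x) := hq_out _
    have h1 : hq (x * b₀ * x) = hq x := by
      have h2 := (hΨm (hq x)).1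
      rwa [← hqb₀, hMul_mk, hMul_mk] at h2
    have hHxbx : Heq (x*b₀*x) x := hq_exact h1
    have hxbx : x*b₀*x ≠ z := by
      intro h
      apply hx
      rw [h] at hHxbx
      exact heq_zero hz hdich (Heq_symm hHxbx)
    have hxb : x * b₀ ≠ z := fun h => hxbx (by rw [h, (hz x).1])
    have hbx : b₀ * x ≠ z := by
      intro h
      apply hxbx
      rw [mul_assoc, h, (hz x).2]
    obtain ⟨c1, hc1, hc1'⟩ := hreg (x*b₀)
    obtain ⟨c2, hc2, hc2'⟩ := hreg (b₀*x)
    obtain ⟨x', hx'1, hx'2⟩ := hreg x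
    obtain ⟨he, heL, heR⟩ := mc hc1 hc1' ((stR hz hdich hxb).2) ((stL hz hdich hxb).2)
    obtain ⟨hf, hfL, hfR⟩ := mc hc2 hc2' ((stR hz hdich hbx).2) ((stL hz hdich hbx).2)
    obtain ⟨m1, m2, mR, mL⟩ := invInCls hx'1 he hf heL hfR
    refine ⟨(b₀*c1*x) * x' * (x*c2*b₀), ⟨m1, m2⟩, ?_⟩
    rw [← hqb₀]
    apply hq_sound
    exact ⟨Req_trans mR heR, Leq_trans mL hfL⟩
  have hΨz : Ψ (hq z) = hq z := by
    have h2 := (hΨm (hq z)).2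
    set c := Quotient.out (Ψ (hq z)) with hc
    have hqc : hq c = Ψ (hq z) := hq_out _
    rw [← hqc, hMul_mk, hMul_mk] at h2
    rw [(hz c).2, (hz c).1] at h2
    rw [← hqc]
    exact h2.symm
  set ψ : S → S := fun x => if h : x = z then z else Classical.choose (key x h) with hψ
  have hψz : ψ z = z := by simp [hψ]
  have hψspec : ∀ (x : S) (h : x ≠ z),
      ((x * ψ x * x = x ∧ ψ x * x * ψ x = ψ x) ∧ hq (ψ x) = Ψ (hq x)) := by
    intro x h
    simp only [hψ, dif_neg h]
    exact Classical.choose_spec (key x h)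
  have hψne : ∀ (x : S) (h : x ≠ z), ψ x ≠ z := by
    intro x h hz'
    have h1 := (hψspec x h).2
    rw [hz'] at h1
    have h2 : Ψ (hq z) = Ψ (Ψ (hq x)) := by rw [h1]
    rw [hΨinv, hΨz] at h2
    exact h (heq_zero hz hdich (hq_exact h2.symm))
  have hinvol : Function.Involutive ψ := by
    intro x
    by_cases h : x = z
    · rw [h, hψz, hψz]
    · have h1 := hψspec x h
      have hb := hψne x h
      have h2 := hψspec (ψ x) hb
      have h3 : hq (ψ (ψ x)) = hq x := by
        rw [h2.2, h1.2, hΨinv]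
      exact inv_unique (x := ψ x) h2.1 ⟨h1.1.2, h1.1.1⟩ (hq_exact h3)
  refine ⟨hinvol.toPerm, fun x => hinvol x, ?_⟩
  intro x
  simp only [Function.Involutive.coe_toPerm]
  by_cases h : x = z
  · rw [h, hψz, (hz z).1, (hz z).1]
    exact ⟨rfl, rfl⟩
  · exact (hψspec x h).1


lemma groupInvPack [Fintype S] {K : Set S} (hK : IsIdeal K) {N : ℕ} (hN2 : 2 ≤ N)
    (hNidem : ∀ x : S, pw x (N-1) * pw x (N-1) = pw x (N-1))
    (hRsq : ∀ x ∈ K, x = x*x ∨ ∃ w, x = (x*x)*w) :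
    ∀ x ∈ K, pw x (2*N-2) ∈ K ∧ pw (pw x (2*N-2)) (2*N-2) = x ∧
      x * pw x (2*N-2) * x = x ∧ pw x (2*N-2) * x * pw x (2*N-2) = pw x (2*N-2) := by
  intro x hx
  have hfix : pw x N = x := pw_fix_of_Rsq hN2 (hNidem x) (hRsq x hx)
  have hper := pw_period hfix
  obtain ⟨M, rfl⟩ : ∃ M, N = M + 2 := ⟨N-2, by omega⟩
  have e1 : 2*(M+2) - 2 = 2*M+2 := by omega
  rw [e1]
  refine ⟨?_, ?_, ?_, ?_⟩
  · have h2 : pw x (2*M+2) = pw x (2*M+1) * x := rfl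
    rw [h2]
    exact (hK.2 x hx _).1
  · rw [pw_pw]
    have e2 : (2*M+2)*(2*M+2) + (2*M+2) + (2*M+2) = (4*M+4)*(M+2) + 0 := by ring
    rw [e2, hper]
    rfl
  · calc x * pw x (2*M+2) * x = pw x (2*M+2+1) * x := by rw [← pw_comm]
    _ = pw x (2*M+2+1+1) := by rw [← pw_succ]
    _ = pw x (1*(M+2) + (M+2)) := by rw [show 2*M+2+1+1 = 1*(M+2)+(M+2) from by ring]
    _ = pw x (M+2) := hper 1 (M+2)
    _ = x := hfix
  · calc pw x (2*M+2) * x * pw x (2*M+2) = pw x (2*M+2+1) * pw x (2*M+2) := by rw [← pw_succ]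
    _ = pw x ((2*M+2+1) + (2*M+2) + 1) := by rw [← pw_add]
    _ = pw x (2*(M+2) + (2*M+2)) := by rw [show (2*M+2+1)+(2*M+2)+1 = 2*(M+2)+(2*M+2) from by ring]
    _ = pw x (2*M+2) := hper 2 (2*M+2)

end ZRB
section
open ZRB

/-- A finite regular semigroup of minimum cardinality possessing a permutation matching
but no involution matching is completely 0-simple, and is in fact a 0-rectangular band:
it has a zero z, S² ≠ 0, no proper nonzero ideals, a primitive idempotent, and
x² ∈ {x, z} for all x (trivial maximal subgroups). -/
theorem minimal_counterexample_is_zero_rectangular_band {S : Type} [Semigroup S] [Fintype S]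
    (hreg : ∀ a : S, ∃ b : S, a * b * a = a ∧ b * a * b = b)
    (hmatch : ∃ φ : Equiv.Perm S, ∀ x : S, x * φ x * x = x ∧ φ x * x * φ x = φ x)
    (hninv : ¬ ∃ φ : Equiv.Perm S, (∀ x, φ (φ x) = x) ∧
      ∀ x : S, x * φ x * x = x ∧ φ x * x * φ x = φ x)
    (hmin : ∀ (T : Type) [Semigroup T] [Fintype T],
      (∀ a : T, ∃ b : T, a * b * a = a ∧ b * a * b = b) →
      (∃ φ : Equiv.Perm T, ∀ x : T, x * φ x * x = x ∧ φ x * x * φ x = φ x) →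
      (¬ ∃ φ : Equiv.Perm T, (∀ x, φ (φ x) = x) ∧
        ∀ x : T, x * φ x * x = x ∧ φ x * x * φ x = φ x) →
      Fintype.card S ≤ Fintype.card T) :
    ∃ z : S, (∀ x : S, z * x = z ∧ x * z = z) ∧
      (∃ x y : S, x * y ≠ z) ∧
      (∀ I : Set S, I.Nonempty → (∀ x ∈ I, ∀ s : S, s * x ∈ I ∧ x * s ∈ I) →
        I = {z} ∨ I = Set.univ) ∧
      (∃ e : S, e * e = e ∧ e ≠ z ∧
        ∀ f : S, f * f = f → f ≠ z → e * f = f → f * e = f → f = e) ∧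
      (∀ x : S, x * x = x ∨ x * x = z) := by
  classical
  obtain ⟨φ, hφ⟩ := hmatch
  -- Step 0: |S| ≥ 2
  have hcard2 : 2 ≤ Fintype.card S := by
    by_contra hlt
    push_neg at hlt
    have h1 : Fintype.card S ≤ 1 := by omega
    have hsub : Subsingleton S := Fintype.card_le_one_iff_subsingleton.mp h1
    exact hninv ⟨Equiv.refl S, fun x => Subsingleton.elim _ _,
      fun x => ⟨Subsingleton.elim _ _, Subsingleton.elim _ _⟩⟩
  haveI : Nonempty S := by
    rw [← Fintype.card_pos_iff]
    omega
  obtain ⟨N, hN2, hNidem⟩ := ZRB.uniformN (S := S)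
  -- Step 1: minimal ideal is a singleton, giving a zero
  obtain ⟨K, hK, hKmin⟩ := ZRB.exists_minideal (S := S)
  have hRsq := ZRB.minideal_Rsq hK hKmin
  have hpack := ZRB.groupInvPack hK hN2 hNidem hRsq
  have hKsub : ∀ a ∈ K, ∀ b ∈ K, a = b := by
    by_contra hcon
    push_neg at hcon
    obtain ⟨k₁, hk₁, k₂, hk₂, hkne⟩ := hcon
    letI iT : Semigroup (ReesQ K) := reesSG hK.2
    letI iTf : Fintype (ReesQ K) := reesFintype
    have hTninv : ¬ ∃ Ψ : Equiv.Perm (ReesQ K), (∀ q, Ψ (Ψ q) = q) ∧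
        ∀ q : ReesQ K, q * Ψ q * q = q ∧ Ψ q * q * Ψ q = Ψ q := by
      rintro ⟨Ψ, hinv, hm⟩
      exact hninv (combine hK.2 _ hpack Ψ hinv (fun q => hm q))
    have hTreg : ∀ a : ReesQ K, ∃ b : ReesQ K, a * b * a = a ∧ b * a * b = b := by
      rintro ⟨a⟩
      obtain ⟨b, hb1, hb2⟩ := hreg a
      exact ⟨rq K b, congrArg (Quotient.mk _) hb1, congrArg (Quotient.mk _) hb2⟩
    have hTmatch : ∃ Φ : Equiv.Perm (ReesQ K),
        ∀ q : ReesQ K, q * Φ q * q = q ∧ Φ q * q * Φ q = Φ q := by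
      obtain ⟨Φ, hΦ⟩ := inducedPerm hK.2 φ hφ
      exact ⟨Φ, fun q => hΦ q⟩
    have hle := hmin (ReesQ K) hTreg hTmatch hTninv
    have hlt : Fintype.card (ReesQ K) < Fintype.card S := by
      apply Fintype.card_lt_of_surjective_not_injective (rq K) (rq_surj K)
      intro hinj
      exact hkne (hinj (rq_sound hk₁ hk₂))
    omega
  obtain ⟨z, hzK⟩ := hK.1
  have hz : ∀ x : S, z * x = z ∧ x * z = z := by
    intro x
    exact ⟨hKsub _ (hK.2 z hzK x).2 z hzK, hKsub _ (hK.2 z hzK x).1 z hzK⟩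
  -- Step 2: S·S ≠ 0
  obtain ⟨x₀, hx₀⟩ := Fintype.exists_ne_of_one_lt_card (by omega) z
  obtain ⟨b₀, hb₀1, hb₀2⟩ := hreg x₀
  have hS2 : x₀ * b₀ ≠ z := by
    intro h
    apply hx₀
    rw [← hb₀1, h, (hz x₀).1]
  -- Step 3: ideal dichotomy
  have hideal : ∀ I : Set S, I.Nonempty → (∀ x ∈ I, ∀ s : S, s * x ∈ I ∧ x * s ∈ I) →
      I = {z} ∨ I = Set.univ := by
    intro I hne hcl
    by_contra hcon
    push_neg at hcon
    obtain ⟨hIz, hIu⟩ := hcon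
    have hzI : z ∈ I := by
      obtain ⟨w, hw⟩ := hne
      have h1 := (hcl w hw z).1
      rwa [(hz w).1] at h1
    obtain ⟨w, hwI', hwz⟩ : ∃ w ∈ I, w ≠ z := by
      by_contra hcon2
      push_neg at hcon2
      apply hIz
      ext y
      simp only [Set.mem_singleton_iff]
      exact ⟨fun hy => hcon2 y hy, fun hy => hy ▸ hzI⟩
    obtain ⟨v, hv⟩ : ∃ v, v ∉ I := by
      by_contra hcon2
      push_neg at hcon2
      exact hIu (Set.eq_univ_of_forall hcon2)
    have hmapsTo : ∀ x ∈ I, φ x ∈ I := by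
      intro x hx
      have h1 := (hφ x).2
      have h2 : (φ x * x) * φ x ∈ I := (hcl _ ((hcl x hx (φ x)).1) (φ x)).2
      rwa [h1] at h2
    have hpre := perm_pre φ hmapsTo
    letI iI : Semigroup ↥I := subSG (fun x hx y hy => (hcl x hx y).2)
    letI : Fintype ↥I := (Set.toFinite I).fintype
    by_cases hT1 : ∃ ψ : Equiv.Perm ↥I, (∀ X, ψ (ψ X) = X) ∧
        ∀ X : ↥I, X * ψ X * X = X ∧ ψ X * X * ψ X = ψ X
    · -- I itself has an involution matching; then ReesQ I can't
      obtain ⟨ψ₁, hψ₁inv, hψ₁m⟩ := hT1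
      letI iT : Semigroup (ReesQ I) := reesSG (fun x hx s => hcl x hx s)
      letI iTf : Fintype (ReesQ I) := reesFintype
      have hψpack : ∀ x ∈ I, (fun y => if h : y ∈ I then (ψ₁ ⟨y, h⟩).1 else y) x ∈ I ∧
          (fun y => if h : y ∈ I then (ψ₁ ⟨y, h⟩).1 else y)
            ((fun y => if h : y ∈ I then (ψ₁ ⟨y, h⟩).1 else y) x) = x ∧
          x * (fun y => if h : y ∈ I then (ψ₁ ⟨y, h⟩).1 else y) x * x = x ∧
          (fun y => if h : y ∈ I then (ψ₁ ⟨y, h⟩).1 else y) x * x *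
            (fun y => if h : y ∈ I then (ψ₁ ⟨y, h⟩).1 else y) x =
            (fun y => if h : y ∈ I then (ψ₁ ⟨y, h⟩).1 else y) x := by
        intro x hx
        simp only [dif_pos hx]
        have hmem : (ψ₁ ⟨x, hx⟩).1 ∈ I := (ψ₁ ⟨x, hx⟩).2
        simp only [dif_pos hmem]
        refine ⟨hmem, ?_, ?_, ?_⟩
        · have h1 : (⟨(ψ₁ ⟨x, hx⟩).1, hmem⟩ : ↥I) = ψ₁ ⟨x, hx⟩ := Subtype.ext rfl
          rw [h1, hψ₁inv]
        · exact congrArg Subtype.val ((hψ₁m ⟨x, hx⟩).1)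
        · exact congrArg Subtype.val ((hψ₁m ⟨x, hx⟩).2)
      have hTninv : ¬ ∃ Ψ : Equiv.Perm (ReesQ I), (∀ q, Ψ (Ψ q) = q) ∧
          ∀ q : ReesQ I, q * Ψ q * q = q ∧ Ψ q * q * Ψ q = Ψ q := by
        rintro ⟨Ψ, hinv, hm⟩
        exact hninv (combine (fun x hx s => hcl x hx s) _ hψpack Ψ hinv (fun q => hm q))
      have hTreg : ∀ a : ReesQ I, ∃ b : ReesQ I, a * b * a = a ∧ b * a * b = b := by
        rintro ⟨a⟩
        obtain ⟨b, hb1, hb2⟩ := hreg a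
        exact ⟨rq I b, congrArg (Quotient.mk _) hb1, congrArg (Quotient.mk _) hb2⟩
      have hTmatch : ∃ Φ : Equiv.Perm (ReesQ I),
          ∀ q : ReesQ I, q * Φ q * q = q ∧ Φ q * q * Φ q = Φ q := by
        obtain ⟨Φ, hΦ⟩ := inducedPerm (fun x hx s => hcl x hx s) φ hφ
        exact ⟨Φ, fun q => hΦ q⟩
      have hle := hmin (ReesQ I) hTreg hTmatch hTninv
      have hlt : Fintype.card (ReesQ I) < Fintype.card S := by
        apply Fintype.card_lt_of_surjective_not_injective (rq I) (rq_surj I)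
        intro hinj
        exact hwz (hinj (rq_sound hwI' hzI))
      omega
    · -- subsemigroup I violates minimality
      have hIreg : ∀ X : ↥I, ∃ Y : ↥I, X * Y * X = X ∧ Y * X * Y = Y := by
        rintro ⟨x, hx⟩
        obtain ⟨b, hb1, hb2⟩ := hreg x
        have hbI : b ∈ I := by
          have h1 : b * x ∈ I := (hcl x hx b).1
          have h2 : (b * x) * b ∈ I := (hcl _ h1 b).2
          rwa [hb2] at h2
        exact ⟨⟨b, hbI⟩, Subtype.ext hb1, Subtype.ext hb2⟩
      have hImatch : ∃ Φ : Equiv.Perm ↥I,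
          ∀ X : ↥I, X * Φ X * X = X ∧ Φ X * X * Φ X = Φ X := by
        refine ⟨⟨fun X => ⟨φ X.1, hmapsTo _ X.2⟩, fun X => ⟨φ.symm X.1, ?_⟩, ?_, ?_⟩, ?_⟩
        · apply hpre
          rw [Equiv.apply_symm_apply]
          exact X.2
        · intro X
          apply Subtype.ext
          simp
        · intro X
          apply Subtype.ext
          simp
        · intro X
          exact ⟨Subtype.ext (hφ X.1).1, Subtype.ext (hφ X.1).2⟩
      have hle := hmin ↥I hIreg hImatch hT1
      have hlt : Fintype.card ↥I < Fintype.card S := by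
        apply Fintype.card_lt_of_injective_of_notMem Subtype.val Subtype.val_injective
          (b := v)
        intro hmem
        obtain ⟨⟨y, hy⟩, hy2⟩ := hmem
        rw [← hy2] at hv
        exact hv hy
      omega
  have hdich : ∀ a : S, a ≠ z → ∀ b : S, b ∈ Pid a := by
    intro a ha b
    rcases hideal (Pid a) (pid_isIdeal a).1 (pid_isIdeal a).2 with h | h
    · exfalso
      apply ha
      have h2 := mem_pid_self a
      rw [h] at h2
      exact h2
    · rw [h]
      trivial
  -- Step 4: primitive idempotent
  have hprim : ∃ e : S, e * e = e ∧ e ≠ z ∧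
      ∀ f : S, f * f = f → f ≠ z → e * f = f → f * e = f → f = e := by
    set E : Finset S := Finset.univ.filter (fun e => e * e = e ∧ e ≠ z) with hE
    have hxbE : x₀ * b₀ ∈ E := by
      rw [hE, Finset.mem_filter]
      refine ⟨Finset.mem_univ _, ?_, hS2⟩
      calc (x₀*b₀)*(x₀*b₀) = (x₀*b₀*x₀)*b₀ := by simp [mul_assoc]
      _ = x₀*b₀ := by rw [hb₀1]
    set D : S → Finset S := fun e => E.filter (fun g => e * g = g ∧ g * e = g) with hD
    obtain ⟨e, heE, hemin⟩ := Finset.exists_min_image E (fun e => (D e).card) ⟨_, hxbE⟩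
    rw [hE, Finset.mem_filter] at heE
    refine ⟨e, heE.2.1, heE.2.2, ?_⟩
    intro f hf1 hf2 hef hfe
    by_contra hne
    have hfE : f ∈ E := by
      rw [hE, Finset.mem_filter]
      exact ⟨Finset.mem_univ _, hf1, hf2⟩
    have hsub : D f ⊆ D e := by
      intro g hg
      rw [hD, Finset.mem_filter] at hg ⊢
      obtain ⟨hgE, hfg, hgf⟩ := hg
      refine ⟨hgE, ?_, ?_⟩
      · calc e * g = e * (f * g) := by rw [hfg]
        _ = (e * f) * g := by rw [mul_assoc]
        _ = f * g := by rw [hef]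
        _ = g := hfg
      · calc g * e = (g * f) * e := by rw [hgf]
        _ = g * (f * e) := by rw [mul_assoc]
        _ = g * f := by rw [hfe]
        _ = g := hgf
    have heDe : e ∈ D e := by
      rw [hD, Finset.mem_filter]
      refine ⟨?_, heE.2.1, heE.2.1⟩
      rw [hE, Finset.mem_filter]
      exact ⟨Finset.mem_univ _, heE.2.1, heE.2.2⟩
    have heDf : e ∉ D f := by
      rw [hD, Finset.mem_filter]
      rintro ⟨-, hfe', hef'⟩
      exact hne (by rw [← hef, hef'])
    have hssub : D f ⊂ D e := ⟨hsub, fun hc => heDf (hc heDe)⟩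
    have hlt := Finset.card_lt_card hssub
    have hge := hemin f hfE
    omega
  -- Step 5: trivial subgroups via the H-quotient
  have hsq : ∀ x : S, x * x = x ∨ x * x = z := by
    letI iH : Semigroup (HQ S) := hSG hz hdich
    letI : Fintype (HQ S) := hFintype
    have hHreg : ∀ a : HQ S, ∃ b : HQ S, a * b * a = a ∧ b * a * b = b := by
      rintro ⟨a⟩
      obtain ⟨b, hb1, hb2⟩ := hreg a
      exact ⟨hq b, congrArg (Quotient.mk _) hb1, congrArg (Quotient.mk _) hb2⟩
    have hHmatch : ∃ Φ : Equiv.Perm (HQ S),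
        ∀ q : HQ S, q * Φ q * q = q ∧ Φ q * q * Φ q = Φ q := by
      obtain ⟨Φ, hΦ⟩ := hq_perm hz hdich φ hφ
      exact ⟨Φ, fun q => hΦ q⟩
    have hHninv : ¬ ∃ Ψ : Equiv.Perm (HQ S), (∀ q, Ψ (Ψ q) = q) ∧
        ∀ q : HQ S, q * Ψ q * q = q ∧ Ψ q * q * Ψ q = Ψ q := by
      rintro ⟨Ψ, hinv, hm⟩
      exact hninv (hq_lift hz hdich hreg Ψ hinv (fun q => hm q))
    have hle := hmin (HQ S) hHreg hHmatch hHninv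
    have hge : Fintype.card (HQ S) ≤ Fintype.card S :=
      Fintype.card_le_of_surjective _ hq_surj
    have hinj : Function.Injective (hq : S → HQ S) := by
      have hbij := (Fintype.bijective_iff_surjective_and_card (hq : S → HQ S)).mpr
        ⟨hq_surj, Nat.le_antisymm hle hge⟩
      exact hbij.1
    intro x
    by_cases h : x * x = z
    · exact Or.inr h
    · exact Or.inl (hinj (hq_sound ⟨stR hz hdich h, stL hz hdich h⟩))
  exact ⟨z, hz, ⟨x₀, b₀, hS2⟩, hideal, hprim, hsq⟩

end
end

section
/- Colour alignment implies involution matching: Let S be an m × n 0-rectangular band with a permutation matching φ. Assign to each girl a ∈ {1,...,m} the multiset of colours {φ(a,α)₂ : 1 ≤ α ≤ n} (second coordinate of φ); this gives each girl n balls with exactly m balls of each of the n colours in total. If there exists a solution to the colour alignment problem for this assignment—a perfect pairing of the mn balls (each ball exchanged exactly once, possibly with itself via the same girl) after which every girl holds exactly one ball of each colour—then S has an involution matching, given by Φ(a, φ(b,β)₂) = (b, φ(a,α)₂) whenever girl a's ball φ(a,α)₂ is exchanged with girl b's ball φ(b,β)₂. -/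
/-- Theorem 2.4: a solution of the colour alignment problem for the ball assignment
induced by a permutation matching φ of an m × n 0-rectangular band (with idempotent set E)
yields an involution matching. Girl a's balls are coloured (φ(a,α)).2; the exchange is an
involution σ of the balls after which every girl holds all n colours. -/
theorem colour_alignment_gives_involution_matching (m n : ℕ)
    (E : Set (Fin m × Fin n)) (φ : Equiv.Perm (Fin m × Fin n))
    (hφ : ∀ p : Fin m × Fin n, (p.1, (φ p).2) ∈ E ∧ ((φ p).1, p.2) ∈ E)
    (σ : Fin m × Fin n → Fin m × Fin n) (hσ : ∀ p, σ (σ p) = p)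
    (hcolours : ∀ a : Fin m, Function.Injective (fun α : Fin n => (φ (σ (a, α))).2)) :
    ∃ Φ : Fin m × Fin n → Fin m × Fin n,
      (∀ p, Φ (Φ p) = p) ∧
      ∀ p : Fin m × Fin n, (p.1, (Φ p).2) ∈ E ∧ ((Φ p).1, p.2) ∈ E := by
  have hbij : ∀ a : Fin m, Function.Bijective (fun α : Fin n => (φ (σ (a, α))).2) :=
    fun a => Finite.injective_iff_bijective.mp (hcolours a)
  let ψ : Fin m → Fin n ≃ Fin n := fun a => Equiv.ofBijective _ (hbij a)
  have hψ : ∀ (a : Fin m) (c : Fin n), (φ (σ (a, (ψ a).symm c))).2 = c := by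
    intro a c
    exact (ψ a).apply_symm_apply c
  refine ⟨fun p => ((σ (p.1, (ψ p.1).symm p.2)).1, (φ (p.1, (ψ p.1).symm p.2)).2), ?_, ?_⟩
  · intro p
    obtain ⟨a, c⟩ := p
    set α := (ψ a).symm c with hα
    obtain ⟨b, β, hbβ⟩ : ∃ b β, σ (a, α) = (b, β) := ⟨_, _, rfl⟩
    have hback : σ (b, β) = (a, α) := by rw [← hbβ, hσ]
    have hcol : (φ (a, α)).2 = (ψ b) β := by
      show _ = (φ (σ (b, β))).2
      rw [hback]
    simp only [← hα, hbβ, hcol]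
    have hsymm : (ψ b).symm ((ψ b) β) = β := (ψ b).symm_apply_apply β
    simp only [hsymm, hback]
    have : (φ (σ (a, α))).2 = c := hψ a c
    rw [hbβ] at this
    simp [this]
  · intro p
    obtain ⟨a, c⟩ := p
    set α := (ψ a).symm c with hα
    constructor
    · exact (hφ (a, α)).1
    · obtain ⟨b, β, hbβ⟩ : ∃ b β, σ (a, α) = (b, β) := ⟨_, _, rfl⟩
      have : (φ (σ (a, α))).2 = c := hψ a c
      rw [hbβ] at this
      simpa [← hα, hbβ, this] using (hφ (b, β)).1
end

section
/- In the construction of Theorem 2.4, the map Φ defined by Φ(a, φ(b,β)₂) = (b, φ(a,α)₂) for each exchange is well-defined (no girl ends with two balls of the same colour forces injectivity of the second coordinates arising for each fixed girl a), has domain equal to the whole m × n array, and satisfies Φ² = id. -/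
/-- The relation defining Φ in Theorem 2.4: the exchange of girl a's ball (a,α) with ball
σ(a,α) = (b,β) contributes the pair Φ(a, φ(b,β)₂) = (b, φ(a,α)₂). -/
def exchRel (m n : ℕ) (φ : Equiv.Perm (Fin m × Fin n))
    (σ : Fin m × Fin n → Fin m × Fin n) (p q : Fin m × Fin n) : Prop :=
  ∃ (a : Fin m) (α : Fin n),
    p = (a, (φ (σ (a, α))).2) ∧ q = ((σ (a, α)).1, (φ (a, α)).2)

/-- The map Φ of Theorem 2.4 is well defined (single valued), is defined on the whole
m × n array, and satisfies Φ² = id. -/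
theorem exchange_map_well_defined_involution (m n : ℕ)
    (E : Set (Fin m × Fin n)) (φ : Equiv.Perm (Fin m × Fin n))
    (hφ : ∀ p : Fin m × Fin n, (p.1, (φ p).2) ∈ E ∧ ((φ p).1, p.2) ∈ E)
    (σ : Fin m × Fin n → Fin m × Fin n) (hσ : ∀ p, σ (σ p) = p)
    (hcolours : ∀ a : Fin m, Function.Injective (fun α : Fin n => (φ (σ (a, α))).2)) :
    (∀ p q q' : Fin m × Fin n, exchRel m n φ σ p q → exchRel m n φ σ p q' → q = q') ∧
    (∀ p : Fin m × Fin n, ∃ q, exchRel m n φ σ p q) ∧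
    (∀ p q : Fin m × Fin n, exchRel m n φ σ p q → exchRel m n φ σ q p) := by
  refine ⟨?_, ?_, ?_⟩
  · rintro p q q' ⟨a, α, hp, hq⟩ ⟨a', α', hp', hq'⟩
    rw [hp] at hp'
    have ha : a = a' := (Prod.mk.injEq _ _ _ _ ▸ hp').1
    subst ha
    have hα : α = α' := hcolours a (Prod.mk.injEq _ _ _ _ ▸ hp').2
    subst hα
    rw [hq, hq']
  · rintro ⟨a, c⟩
    have hsurj : Function.Surjective (fun α : Fin n => (φ (σ (a, α))).2) :=
      Finite.surjective_of_injective (hcolours a)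
    obtain ⟨α, hα⟩ := hsurj c
    exact ⟨((σ (a, α)).1, (φ (a, α)).2), a, α, by simp [← hα], rfl⟩
  · rintro p q ⟨a, α, hp, hq⟩
    refine ⟨(σ (a, α)).1, (σ (a, α)).2, ?_, ?_⟩
    · rw [hq]; simp [hσ]
    · rw [hp]; simp [hσ]
end
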